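/- arXiv:2411.05228 — 9 statements merged into one kernel-verified Lean document; each statement's English description precedes it below -/
import Mathlib

section
/- Let g : ℝ^d → ℝ^n be continuous with convex image whose closure is Z, let F : ℝ^n → ℝ^n, let z* ∈ ri Z satisfy ⟨F(z*), z − z*⟩ ≥ 0 for all z ∈ Z, let η > 0, let θ_t ∈ ℝ^d with z_t = g(θ_t), and define the surrogate loss ℓ_t(θ) = (1/2)‖g(θ) − (z_t − ηF(z_t))‖² with ℓ_t* = inf over θ of ℓ_t(θ). Then ℓ_t(θ_t) − ℓ_t* ≤ (η²/2)‖F(z_t) − F(z*)‖². -/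
open scoped RealInnerProductSpace

/-- With `Z = closure {g(θ)}` convex, `z* ∈ ri Z` solving the VI, `η > 0`,
`z_t = g(θ_t)`, and surrogate `ℓ_t(θ) = (1/2)‖g(θ) − (z_t − ηF(z_t))‖²` with infimum
`ℓ_t*`, we have `ℓ_t(θ_t) − ℓ_t* ≤ (η²/2)‖F(z_t) − F(z*)‖²`. -/
theorem stmt2 (d n : ℕ)
    (g : EuclideanSpace ℝ (Fin d) → EuclideanSpace ℝ (Fin n))
    (hg : Continuous g) (hconv : Convex ℝ (Set.range g))
    (F : EuclideanSpace ℝ (Fin n) → EuclideanSpace ℝ (Fin n))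
    (zs : EuclideanSpace ℝ (Fin n)) (hzs : zs ∈ closure (Set.range g))
    (hri : ∀ z ∈ closure (Set.range g), ∃ lam : ℝ, 1 < lam ∧
      (1 - lam) • z + lam • zs ∈ closure (Set.range g))
    (hsol : ∀ z ∈ closure (Set.range g), 0 ≤ ⟪F zs, z - zs⟫)
    (η : ℝ) (hη : 0 < η)
    (θt : EuclideanSpace ℝ (Fin d))
    (ℓ : EuclideanSpace ℝ (Fin d) → ℝ)
    (hℓ : ∀ θ, ℓ θ = (1 / 2) * ‖g θ - (g θt - η • F (g θt))‖ ^ 2)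
    (ℓstar : ℝ) (hℓstar : ℓstar = ⨅ θ, ℓ θ) :
    ℓ θt - ℓstar ≤ (η ^ 2 / 2) * ‖F (g θt) - F zs‖ ^ 2 := by
  -- Step 1: since zs is in the relative interior, the VI is an equality.
  have hperp : ∀ z ∈ closure (Set.range g), ⟪F zs, z - zs⟫ = 0 := by
    intro z hz
    have h1 := hsol z hz
    obtain ⟨lam, hlam, hmem⟩ := hri z hz
    have h2 := hsol _ hmem
    have heq : (1 - lam) • z + lam • zs - zs = (1 - lam) • (z - zs) := by
      module
    rw [heq, real_inner_smul_right] at h2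
    nlinarith [h1, h2]
  set zt := g θt with hztdef
  have hztZ : zt ∈ closure (Set.range g) := subset_closure ⟨θt, rfl⟩
  -- Step 2: uniform lower bound on ℓ.
  have key : ∀ θ : EuclideanSpace ℝ (Fin d),
      ℓ θt - (η ^ 2 / 2) * ‖F zt - F zs‖ ^ 2 ≤ ℓ θ := by
    intro θ
    have hz : g θ ∈ closure (Set.range g) := subset_closure ⟨θ, rfl⟩
    have hv : ⟪F zs, g θ - zt⟫ = 0 := by
      have h : g θ - zt = (g θ - zs) - (zt - zs) := by abel
      rw [h, inner_sub_right, hperp _ hz, hperp _ hztZ]; ring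
    rw [hℓ θ, hℓ θt]
    have e1 : g θ - (zt - η • F zt) = (g θ - zt) + η • F zt := by abel
    have e2 : zt - (zt - η • F zt) = η • F zt := by abel
    rw [e1, e2]
    have A := norm_add_sq_real (g θ - zt) (η • F zt)
    have B := norm_add_sq_real (η • (F zt - F zs)) (g θ - zt)
    have hBnn : (0:ℝ) ≤ ‖η • (F zt - F zs) + (g θ - zt)‖ ^ 2 := sq_nonneg _
    have hR : ⟪η • (F zt - F zs), g θ - zt⟫ = η * ⟪F zt, g θ - zt⟫ := by
      rw [real_inner_smul_left, inner_sub_left, hv, sub_zero]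
    have C : ⟪g θ - zt, η • F zt⟫ = ⟪η • (F zt - F zs), g θ - zt⟫ := by
      rw [hR, real_inner_smul_right, real_inner_comm]
    have D1 : ‖η • F zt‖ ^ 2 = η ^ 2 * ‖F zt‖ ^ 2 := by
      rw [norm_smul, Real.norm_eq_abs, mul_pow, sq_abs]
    have D2 : ‖η • (F zt - F zs)‖ ^ 2 = η ^ 2 * ‖F zt - F zs‖ ^ 2 := by
      rw [norm_smul, Real.norm_eq_abs, mul_pow, sq_abs]
    nlinarith [sq_nonneg ‖g θ - zt‖]
  -- Step 3: the infimum respects the bound.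
  have hbdd : ℓ θt - (η ^ 2 / 2) * ‖F zt - F zs‖ ^ 2 ≤ ⨅ θ, ℓ θ := le_ciInf key
  rw [hℓstar]
  linarith
end

section
/- Let g : ℝ^d → ℝ^n be continuous with convex image whose closure is Z, let F : ℝ^n → ℝ^n, let z* ∈ ri Z satisfy ⟨F(z*), z − z*⟩ ≥ 0 for all z ∈ Z, let η > 0, θ_t ∈ ℝ^d, z_t = g(θ_t), and let ℓ_t(θ) = (1/2)‖g(θ) − (z_t − ηF(z_t))‖² with ℓ_t* = inf_θ ℓ_t(θ). Let z_t* = Π(z_t − ηF(z_t)) be the projection onto Z. If θ_{t+1} satisfies the α-descent condition ℓ_t(θ_{t+1}) − ℓ_t* ≤ α²(ℓ_t(θ_t) − ℓ_t*) for some α ∈ [0,1), then ‖g(θ_{t+1}) − z_t*‖ ≤ α η ‖F(z_t) − F(z*)‖. -/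
open scoped RealInnerProductSpace

set_option maxHeartbeats 1000000

/-- Under the setting of Statement 2, if `θ_{t+1}` satisfies the α-descent
condition `ℓ_t(θ_{t+1}) − ℓ_t* ≤ α²(ℓ_t(θ_t) − ℓ_t*)` with `α ∈ [0,1)`, and
`z_t* = Π(z_t − ηF(z_t))` is the Euclidean projection onto `Z`, then
`‖g(θ_{t+1}) − z_t*‖ ≤ αη‖F(z_t) − F(z*)‖`. -/
theorem stmt3 (d n : ℕ)
    (g : EuclideanSpace ℝ (Fin d) → EuclideanSpace ℝ (Fin n))
    (hg : Continuous g) (hconv : Convex ℝ (Set.range g))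
    (F : EuclideanSpace ℝ (Fin n) → EuclideanSpace ℝ (Fin n))
    (zs : EuclideanSpace ℝ (Fin n)) (hzs : zs ∈ closure (Set.range g))
    (hri : ∀ z ∈ closure (Set.range g), ∃ lam : ℝ, 1 < lam ∧
      (1 - lam) • z + lam • zs ∈ closure (Set.range g))
    (hsol : ∀ z ∈ closure (Set.range g), 0 ≤ ⟪F zs, z - zs⟫)
    (η : ℝ) (hη : 0 < η)
    (θt θnext : EuclideanSpace ℝ (Fin d))
    (ℓ : EuclideanSpace ℝ (Fin d) → ℝ)
    (hℓ : ∀ θ, ℓ θ = (1 / 2) * ‖g θ - (g θt - η • F (g θt))‖ ^ 2)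
    (ℓstar : ℝ) (hℓstar : ℓstar = ⨅ θ, ℓ θ)
    (ztproj : EuclideanSpace ℝ (Fin n))
    (hproj_mem : ztproj ∈ closure (Set.range g))
    (hproj : ∀ z ∈ closure (Set.range g),
      ‖ztproj - (g θt - η • F (g θt))‖ ≤ ‖z - (g θt - η • F (g θt))‖)
    (α : ℝ) (hα0 : 0 ≤ α) (hα1 : α < 1)
    (hdesc : ℓ θnext - ℓstar ≤ α ^ 2 * (ℓ θt - ℓstar)) :
    ‖g θnext - ztproj‖ ≤ α * η * ‖F (g θt) - F zs‖ := by
  classical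
  set zt := g θt with hzt
  set w : EuclideanSpace ℝ (Fin n) := zt - η • F zt with hw
  set C := closure (Set.range g) with hC
  have hCc : Convex ℝ C := hconv.closure
  have hztC : zt ∈ C := subset_closure (Set.mem_range_self θt)
  have hznC : g θnext ∈ C := subset_closure (Set.mem_range_self θnext)
  -- orthogonality of F zs to Z - zs
  have hperp : ∀ z ∈ C, ⟪F zs, z - zs⟫ = 0 := by
    intro z hz
    obtain ⟨lam, hlam, hmem⟩ := hri z hz
    have h1 := hsol _ hmem
    have h2 := hsol z hz
    have heq : (1 - lam) • z + lam • zs - zs = (1 - lam) • (z - zs) := by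
      module
    rw [heq, real_inner_smul_right] at h1
    nlinarith
  -- obtuse angle property of projection
  have hinf : ‖w - ztproj‖ = ⨅ z : C, ‖w - z‖ := by
    apply le_antisymm
    · haveI : Nonempty ↑C := ⟨⟨ztproj, hproj_mem⟩⟩
      apply le_ciInf
      rintro ⟨z, hz⟩
      have h := hproj z hz
      rw [norm_sub_rev w ztproj, norm_sub_rev w z]
      exact h
    · exact ciInf_le ⟨0, by rintro _ ⟨z, rfl⟩; exact norm_nonneg _⟩
        (⟨ztproj, hproj_mem⟩ : C)
  have hobtuse := (norm_eq_iInf_iff_real_inner_le_zero hCc hproj_mem).mp hinf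
  -- the value of ℓstar
  set L : ℝ := (1 / 2) * ‖ztproj - w‖ ^ 2 with hL
  have hlow : ∀ θ, L ≤ ℓ θ := by
    intro θ
    rw [hℓ]
    have h := hproj (g θ) (subset_closure (Set.mem_range_self θ))
    nlinarith [norm_nonneg (ztproj - w), norm_nonneg (g θ - w)]
  have hbdd : BddBelow (Set.range ℓ) := ⟨L, by rintro _ ⟨θ, rfl⟩; exact hlow θ⟩
  have hℓstarL : ℓstar = L := by
    apply le_antisymm
    · apply le_of_forall_pos_le_add
      intro ε hε
      have hf : Continuous fun z : EuclideanSpace ℝ (Fin n) =>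
          (1 / 2) * ‖z - w‖ ^ 2 := by continuity
      have hca := hf.continuousAt (x := ztproj)
      rw [Metric.continuousAt_iff] at hca
      obtain ⟨δ, hδ, hδ'⟩ := hca ε hε
      obtain ⟨z, ⟨θ, rfl⟩, hdz⟩ := Metric.mem_closure_iff.mp hproj_mem δ hδ
      have hd : dist (g θ) ztproj < δ := by rwa [dist_comm] at hdz
      have := hδ' hd
      rw [Real.dist_eq] at this
      have h1 : ℓ θ < L + ε := by
        rw [hℓ]
        have h3 := (abs_lt.mp this).2
        rw [hL]
        linarith
      have h2 : ℓstar ≤ ℓ θ := hℓstar ▸ ciInf_le hbdd θ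
      linarith
    · rw [hℓstar]
      exact le_ciInf hlow
  -- key quantities
  set a : ℝ := ‖zt - ztproj‖ with ha
  set c : ℝ := ‖F zt - F zs‖ with hc
  -- the bound 2(ℓ θt - ℓstar) ≤ η² c²
  have hwzt : zt - w = η • F zt := by rw [hw]; abel
  have hexp1 : ‖zt - w‖ ^ 2 = η ^ 2 * ‖F zt‖ ^ 2 := by
    rw [hwzt, norm_smul, Real.norm_eq_abs, mul_pow, sq_abs]
  have hexp2 : ‖ztproj - w‖ ^ 2 =
      a ^ 2 + 2 * (η * ⟪ztproj - zt, F zt⟫) + η ^ 2 * ‖F zt‖ ^ 2 := by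
    have hsplit : ztproj - w = (ztproj - zt) + η • F zt := by rw [hw]; abel
    rw [hsplit, norm_add_sq_real, real_inner_smul_right, norm_smul,
      Real.norm_eq_abs, mul_pow, sq_abs, ha, norm_sub_rev]
  have hperp' : ⟪F zs, zt - ztproj⟫ = 0 := by
    have h1 := hperp zt hztC
    have h2 := hperp ztproj hproj_mem
    have : zt - ztproj = (zt - zs) - (ztproj - zs) := by abel
    rw [this, inner_sub_right, h1, h2, sub_zero]
  have hcs : ⟪zt - ztproj, F zt⟫ ≤ a * c := by
    have hdecomp : ⟪zt - ztproj, F zt⟫ = ⟪zt - ztproj, F zt - F zs⟫ := by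
      rw [inner_sub_right]
      rw [real_inner_comm (zt - ztproj) (F zs)] at *
      rw [hperp']; ring
    rw [hdecomp]
    calc ⟪zt - ztproj, F zt - F zs⟫ ≤ ‖zt - ztproj‖ * ‖F zt - F zs‖ :=
          real_inner_le_norm _ _
      _ = a * c := by rw [ha, hc]
  have hkey : 2 * (ℓ θt - ℓstar) ≤ η ^ 2 * c ^ 2 := by
    have hlt : ℓ θt = (1 / 2) * ‖zt - w‖ ^ 2 := hℓ θt
    have hinner : ⟪ztproj - zt, F zt⟫ = - ⟪zt - ztproj, F zt⟫ := by
      rw [← inner_neg_left]; congr 1; abel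
    have hac : 0 ≤ (a - η * c) ^ 2 := sq_nonneg _
    rw [hℓstarL, hlt, hL]
    nlinarith [hcs, sq_nonneg a]
  -- Pythagoras: ‖g θnext - ztproj‖² ≤ 2(ℓ θnext - ℓstar)
  have hpyth : ‖g θnext - ztproj‖ ^ 2 ≤ 2 * (ℓ θnext - ℓstar) := by
    have hsplit : g θnext - w = (g θnext - ztproj) + (ztproj - w) := by abel
    have hex : ‖g θnext - w‖ ^ 2 = ‖g θnext - ztproj‖ ^ 2
        + 2 * ⟪g θnext - ztproj, ztproj - w⟫ + ‖ztproj - w‖ ^ 2 := by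
      rw [hsplit, norm_add_sq_real]
    have hob := hobtuse (g θnext) hznC
    have hinner : ⟪g θnext - ztproj, ztproj - w⟫ = - ⟪w - ztproj, g θnext - ztproj⟫ := by
      rw [real_inner_comm, ← inner_neg_left]; congr 1; abel
    have hln : ℓ θnext = (1 / 2) * ‖g θnext - w‖ ^ 2 := hℓ θnext
    rw [hℓstarL, hln, hL]
    nlinarith
  -- conclude
  have hA0 : 0 ≤ ‖g θnext - ztproj‖ := norm_nonneg _
  have hc0 : 0 ≤ c := norm_nonneg _
  have hfinal : ‖g θnext - ztproj‖ ^ 2 ≤ (α * η * c) ^ 2 := by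
    have h1 : 2 * (ℓ θnext - ℓstar) ≤ α ^ 2 * (2 * (ℓ θt - ℓstar)) := by linarith
    have h2 : α ^ 2 * (2 * (ℓ θt - ℓstar)) ≤ α ^ 2 * (η ^ 2 * c ^ 2) := by
      apply mul_le_mul_of_nonneg_left hkey (sq_nonneg α)
    calc ‖g θnext - ztproj‖ ^ 2 ≤ 2 * (ℓ θnext - ℓstar) := hpyth
      _ ≤ α ^ 2 * (η ^ 2 * c ^ 2) := le_trans h1 h2
      _ = (α * η * c) ^ 2 := by ring
  nlinarith [hfinal, mul_nonneg (mul_nonneg hα0 hη.le) hc0]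
end

section
/- Let f : ℝ^n → ℝ be differentiable and L-smooth (its gradient is L-Lipschitz), let g : ℝ^d → ℝ^n, and for θ_t ∈ ℝ^d set z_t = g(θ_t) and define the surrogate loss ℓ_t(θ) = (1/2)‖g(θ) − (z_t − (1/L)∇f(z_t))‖² with ℓ_t* = inf_θ ℓ_t(θ). If θ_{t+1} satisfies the α-descent condition ℓ_t(θ_{t+1}) − ℓ_t* ≤ α²(ℓ_t(θ_t) − ℓ_t*) with α ∈ [0,1), then f(g(θ_{t+1})) ≤ f(g(θ_t)) − L(1 − α²)(ℓ_t(θ_t) − ℓ_t*). -/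
open scoped RealInnerProductSpace

/-- Descent lemma: an L-smooth differentiable function satisfies the quadratic upper bound. -/
lemma descent_lemma {n : ℕ} {L : ℝ} (hL : 0 < L)
    (f : EuclideanSpace ℝ (Fin n) → ℝ) (hf : Differentiable ℝ f)
    (hsmooth : ∀ x y, ‖gradient f x - gradient f y‖ ≤ L * ‖x - y‖)
    (z x : EuclideanSpace ℝ (Fin n)) :
    f x ≤ f z + ⟪gradient f z, x - z⟫ + L / 2 * ‖x - z‖ ^ 2 := by
  set v := x - z with hv
  set u := gradient f z with hu
  set φ : ℝ → ℝ := fun t => f (z + t • v) - t * ⟪u, v⟫ - L / 2 * t ^ 2 * ‖v‖ ^ 2 with hφ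
  have hγ : ∀ t : ℝ, HasDerivAt (fun s : ℝ => z + s • v) v t := fun t => by
    simpa using ((hasDerivAt_id t).smul_const v).const_add z
  have hder : ∀ t : ℝ, HasDerivAt φ
      (⟪gradient f (z + t • v), v⟫ - ⟪u, v⟫ - L * t * ‖v‖ ^ 2) t := by
    intro t
    have h1 : HasDerivAt (fun s : ℝ => f (z + s • v)) ⟪gradient f (z + t • v), v⟫ t := by
      have hF := ((hf (z + t • v)).hasGradientAt).hasFDerivAt
      have := hF.comp_hasDerivAt t (hγ t)
      simp only [InnerProductSpace.toDual_apply_apply] at this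
      exact this
    have h2 : HasDerivAt (fun s : ℝ => s * ⟪u, v⟫) ⟪u, v⟫ t := by
      simpa using (hasDerivAt_id t).mul_const (⟪u, v⟫)
    have h3 : HasDerivAt (fun s : ℝ => L / 2 * s ^ 2 * ‖v‖ ^ 2)
        (L * t * ‖v‖ ^ 2) t := by
      have := (((hasDerivAt_pow 2 t).const_mul (L / 2)).mul_const (‖v‖ ^ 2))
      refine this.congr_deriv ?_
      push_cast
      ring
    exact (h1.sub h2).sub h3
  have hmono : AntitoneOn φ (Set.Icc (0 : ℝ) 1) := by
    apply antitoneOn_of_deriv_nonpos (convex_Icc 0 1)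
    · exact Continuous.continuousOn (by
        have : Continuous φ := by
          have := hf.continuous
          fun_prop
        exact this)
    · intro t _
      exact (hder t).differentiableAt.differentiableWithinAt
    · intro t ht
      rw [interior_Icc] at ht
      rw [(hder t).deriv]
      have hb : ⟪gradient f (z + t • v) - u, v⟫ ≤ L * t * ‖v‖ ^ 2 := by
        calc ⟪gradient f (z + t • v) - u, v⟫ ≤ ‖gradient f (z + t • v) - u‖ * ‖v‖ :=
              real_inner_le_norm _ _
          _ ≤ (L * ‖(z + t • v) - z‖) * ‖v‖ := by
              gcongr; exact hsmooth _ _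
          _ = L * t * ‖v‖ ^ 2 := by
              have : ‖(z + t • v) - z‖ = t * ‖v‖ := by
                simp [norm_smul, abs_of_pos ht.1]
              rw [this]; ring
      have := inner_sub_left (𝕜 := ℝ) (gradient f (z + t • v)) u v
      linarith [hb, this.symm.le, this.le]
  have key := hmono (Set.left_mem_Icc.2 zero_le_one) (Set.right_mem_Icc.2 zero_le_one)
    zero_le_one
  have h0 : φ 0 = f z := by simp [hφ]
  have h1 : φ 1 = f (z + (1:ℝ) • v) - 1 * ⟪u, v⟫ - L / 2 * 1 ^ 2 * ‖v‖ ^ 2 := rfl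
  have hx : z + (1:ℝ) • v = x := by rw [hv]; simp
  rw [hx] at h1
  rw [h0, h1] at key
  linarith [key]

/-- For an `L`-smooth differentiable `f` and surrogate
`ℓ_t(θ) = (1/2)‖g(θ) − (z_t − (1/L)∇f(z_t))‖²` with infimum `ℓ_t*`, the α-descent
condition implies `f(g(θ_{t+1})) ≤ f(g(θ_t)) − L(1 − α²)(ℓ_t(θ_t) − ℓ_t*)`. -/
theorem stmt4 (d n : ℕ) (L : ℝ) (hL : 0 < L)
    (f : EuclideanSpace ℝ (Fin n) → ℝ) (hf : Differentiable ℝ f)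
    (hsmooth : ∀ x y, ‖gradient f x - gradient f y‖ ≤ L * ‖x - y‖)
    (g : EuclideanSpace ℝ (Fin d) → EuclideanSpace ℝ (Fin n))
    (θt θnext : EuclideanSpace ℝ (Fin d))
    (α : ℝ) (hα0 : 0 ≤ α) (hα1 : α < 1)
    (ℓ : EuclideanSpace ℝ (Fin d) → ℝ)
    (hℓ : ∀ θ, ℓ θ = (1 / 2) * ‖g θ - (g θt - (1 / L) • gradient f (g θt))‖ ^ 2)
    (ℓstar : ℝ) (hℓstar : ℓstar = ⨅ θ, ℓ θ)
    (hdesc : ℓ θnext - ℓstar ≤ α ^ 2 * (ℓ θt - ℓstar)) :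
    f (g θnext) ≤ f (g θt) - L * (1 - α ^ 2) * (ℓ θt - ℓstar) := by
  set z := g θt with hz
  set u := gradient f (g θt) with hu
  set x := g θnext with hx
  have hdl := descent_lemma hL f hf hsmooth z x
  -- complete the square: ‖x - (z - (1/L)•u)‖² = ‖x-z‖² + (2/L)⟪u,x-z⟫ + (1/L²)‖u‖²
  have hsq : ‖x - (z - (1 / L) • u)‖ ^ 2
      = ‖x - z‖ ^ 2 + 2 * ((1 / L) * ⟪x - z, u⟫) + (1 / L) ^ 2 * ‖u‖ ^ 2 := by
    have : x - (z - (1 / L) • u) = (x - z) + (1 / L) • u := by abel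
    rw [this, norm_add_sq_real, real_inner_smul_right, norm_smul]
    have : ‖(1 : ℝ) / L‖ = 1 / L := by
      rw [Real.norm_eq_abs, abs_of_pos (by positivity)]
    rw [this]; ring
  have hℓt : ℓ θt = (1 / 2) * ((1 / L) ^ 2 * ‖u‖ ^ 2) := by
    rw [hℓ θt]
    congr 1
    have : g θt - (g θt - (1 / L) • u) = (1 / L) • u := by abel
    rw [this, norm_smul]
    have : ‖(1 : ℝ) / L‖ = 1 / L := by
      rw [Real.norm_eq_abs, abs_of_pos (by positivity)]
    rw [this]; ring
  have hℓn : ℓ θnext = (1 / 2) * ‖x - (z - (1 / L) • u)‖ ^ 2 := hℓ θnext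
  have hip : ⟪u, x - z⟫ = ⟪x - z, u⟫ := real_inner_comm _ _
  -- f x ≤ f z + L * ℓ θnext - L * ℓ θt
  have hmain : f x ≤ f z + L * ℓ θnext - L * ℓ θt := by
    rw [hℓn, hℓt, hsq]
    rw [hip] at hdl
    set p : ℝ := ⟪x - z, u⟫ with hp
    have hL' : L ≠ 0 := ne_of_gt hL
    have key : L * (1 / 2 * (‖x - z‖ ^ 2 + 2 * (1 / L * p) + (1 / L) ^ 2 * ‖u‖ ^ 2))
        - L * (1 / 2 * ((1 / L) ^ 2 * ‖u‖ ^ 2)) = L / 2 * ‖x - z‖ ^ 2 + p := by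
      field_simp
      ring
    linarith [hdl, key]
  have h2 : L * ℓ θnext - L * ℓ θt ≤ -(L * (1 - α ^ 2) * (ℓ θt - ℓstar)) := by
    nlinarith [hdesc]
  linarith
end

section
/- Let f : ℝ^n → ℝ be differentiable, L-smooth, and bounded below, and let g : ℝ^d → ℝ^n be continuous with convex image whose closure is Z. Let {θ_t} be a sequence in ℝ^d such that for every t the α-descent condition ℓ_t(θ_{t+1}) − ℓ_t* ≤ α²(ℓ_t(θ_t) − ℓ_t*) holds for the surrogate ℓ_t(θ) = (1/2)‖g(θ) − (z_t − (1/L)∇f(z_t))‖², where z_t = g(θ_t), ℓ_t* = inf_θ ℓ_t(θ), and α ∈ [0,1). Then z_t − z_t* → 0 as t → ∞, where z_t* = Π(z_t − (1/L)∇f(z_t)) is the Euclidean projection onto Z. -/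
open scoped RealInnerProductSpace

set_option maxHeartbeats 1000000

private lemma aux_le_of_forall_pos {a b : ℝ} (h : ∀ ε > 0, a ≤ b + ε) : a ≤ b := by
  by_contra hc
  push_neg at hc
  have := h ((a - b) / 2) (by linarith)
  linarith


private lemma aux_proj {F : Type*} [NormedAddCommGroup F] [InnerProductSpace ℝ F]
    (K : Set F) (hK : Convex ℝ K) (y p : F) (hp : p ∈ K)
    (hmin : ∀ z ∈ K, ‖p - y‖ ≤ ‖z - y‖) :
    ∀ w ∈ K, ⟪y - p, w - p⟫ ≤ 0 := by
  haveI : Nonempty K := ⟨⟨p, hp⟩⟩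
  have hiInf : ‖y - p‖ = ⨅ w : K, ‖y - w‖ := by
    refine le_antisymm (le_ciInf ?_) (ciInf_le (⟨0, ?_⟩ : BddBelow (Set.range fun w : K => ‖y - w‖)) ⟨p, hp⟩)
    · rintro ⟨w, hw⟩
      have := hmin w hw
      rw [norm_sub_rev p, norm_sub_rev w] at this
      exact this
    · rintro x ⟨w, rfl⟩
      exact norm_nonneg _
  exact (norm_eq_iInf_iff_real_inner_le_zero hK hp).mp hiInf

/-- Descent lemma for `L`-smooth functions. -/
private lemma aux_descent {n : ℕ} {L : ℝ} (hL : 0 < L)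
    {f : EuclideanSpace ℝ (Fin n) → ℝ} (hf : Differentiable ℝ f)
    (hsm : ∀ x y, ‖gradient f x - gradient f y‖ ≤ L * ‖x - y‖)
    (a b : EuclideanSpace ℝ (Fin n)) :
    f b ≤ f a + ⟪gradient f a, b - a⟫ + L / 2 * ‖b - a‖ ^ 2 := by
  set h := b - a with hh
  have hgc : Continuous (gradient f) := by
    have : LipschitzWith ⟨L, hL.le⟩ (gradient f) :=
      LipschitzWith.of_dist_le_mul fun x y => by
        rw [dist_eq_norm, dist_eq_norm]; exact hsm x y
    exact this.continuous
  have hγ : ∀ t : ℝ, HasDerivAt (fun s : ℝ => a + s • h) h t := by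
    intro t
    simpa using ((hasDerivAt_id t).smul_const h).const_add a
  have hφ : ∀ t : ℝ, HasDerivAt (fun s : ℝ => f (a + s • h))
      ⟪gradient f (a + t • h), h⟫ t := by
    intro t
    have hg' := (hf (a + t • h)).hasGradientAt
    have := hg'.hasFDerivAt.comp_hasDerivAt t (hγ t)
    simpa [InnerProductSpace.toDual_apply_apply, Function.comp_def] using this
  have hcont : Continuous fun t : ℝ => ⟪gradient f (a + t • h), h⟫ := by
    apply Continuous.inner
    · exact hgc.comp (by continuity)
    · exact continuous_const
  have hint1 : IntervalIntegrable (fun t : ℝ => ⟪gradient f (a + t • h), h⟫)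
      MeasureTheory.volume 0 1 := hcont.intervalIntegrable 0 1
  have hFTC : ∫ t in (0:ℝ)..1, ⟪gradient f (a + t • h), h⟫ =
      f (a + (1:ℝ) • h) - f (a + (0:ℝ) • h) :=
    intervalIntegral.integral_eq_sub_of_hasDerivAt (fun t _ => hφ t) hint1
  have hcont2 : Continuous fun t : ℝ => ⟪gradient f a, h⟫ + L * t * ‖h‖ ^ 2 := by
    continuity
  have hint2 : IntervalIntegrable (fun t : ℝ => ⟪gradient f a, h⟫ + L * t * ‖h‖ ^ 2)
      MeasureTheory.volume 0 1 := hcont2.intervalIntegrable 0 1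
  have hmono : ∫ t in (0:ℝ)..1, ⟪gradient f (a + t • h), h⟫ ≤
      ∫ t in (0:ℝ)..1, (⟪gradient f a, h⟫ + L * t * ‖h‖ ^ 2) := by
    apply intervalIntegral.integral_mono_on (by norm_num) hint1 hint2
    intro t ht
    rw [Set.mem_Icc] at ht
    have h1 : ⟪gradient f (a + t • h) - gradient f a, h⟫ ≤
        ‖gradient f (a + t • h) - gradient f a‖ * ‖h‖ := real_inner_le_norm _ _
    have h2 : ‖gradient f (a + t • h) - gradient f a‖ ≤ L * ‖t • h‖ := by
      simpa using hsm (a + t • h) a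
    have h3 : ‖t • h‖ = t * ‖h‖ := by
      rw [norm_smul, Real.norm_eq_abs, abs_of_nonneg ht.1]
    have h4 := inner_sub_left (𝕜 := ℝ) (gradient f (a + t • h)) (gradient f a) h
    have h5 := mul_le_mul_of_nonneg_right h2 (norm_nonneg h)
    rw [h3] at h5
    nlinarith [norm_nonneg h]
  have hrhs : ∫ t in (0:ℝ)..1, (⟪gradient f a, h⟫ + L * t * ‖h‖ ^ 2) =
      ⟪gradient f a, h⟫ + L / 2 * ‖h‖ ^ 2 := by
    have e : ∀ t : ℝ, ⟪gradient f a, h⟫ + L * t * ‖h‖ ^ 2 =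
        ⟪gradient f a, h⟫ + (L * ‖h‖ ^ 2) * t := fun t => by ring
    simp_rw [e]
    have hintmul : IntervalIntegrable (fun t : ℝ => L * ‖h‖ ^ 2 * t)
        MeasureTheory.volume 0 1 :=
      Continuous.intervalIntegrable (by continuity) 0 1
    rw [intervalIntegral.integral_add intervalIntegrable_const hintmul,
      intervalIntegral.integral_const, intervalIntegral.integral_const_mul, integral_id]
    norm_num
    ring
  have hb1 : a + (1:ℝ) • h = b := by rw [one_smul, hh]; abel
  have hb0 : a + (0:ℝ) • h = a := by simp
  rw [hb1, hb0] at hFTC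
  rw [hrhs] at hmono
  linarith

/-- The per-step decrease of `f` along the trajectory. -/
private lemma aux_step {n : ℕ} {L α : ℝ} (hL : 0 < L) (hα0 : 0 ≤ α) (hα1 : α < 1)
    {f : EuclideanSpace ℝ (Fin n) → ℝ} (hf : Differentiable ℝ f)
    (hsm : ∀ x y, ‖gradient f x - gradient f y‖ ≤ L * ‖x - y‖)
    (a b p : EuclideanSpace ℝ (Fin n))
    (hpa : ⟪(a - (1 / L) • gradient f a) - p, a - p⟫ ≤ 0)
    (hdb : (1/2) * ‖b - (a - (1 / L) • gradient f a)‖ ^ 2 ≤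
      α ^ 2 * ((1/2) * ‖a - (a - (1 / L) • gradient f a)‖ ^ 2) +
      (1 - α ^ 2) * ((1/2) * ‖p - (a - (1 / L) • gradient f a)‖ ^ 2)) :
    f b + L * (1 - α ^ 2) / 2 * ‖a - p‖ ^ 2 ≤ f a := by
  set G := gradient f a with hG
  set Y := a - (1 / L) • G with hYdef
  have hA := aux_descent hL hf hsm a b
  have hbY : b - Y = (b - a) + (1 / L) • G := by rw [hYdef]; abel
  have haY : a - Y = (1 / L) • G := by rw [hYdef]; abel
  have hsmul : ‖(1 / L) • G‖ ^ 2 = (1/L) ^ 2 * ‖G‖ ^ 2 := by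
    rw [norm_smul, Real.norm_eq_abs, mul_pow, sq_abs]
  have hB : ‖b - Y‖ ^ 2 = ‖b - a‖ ^ 2 + 2 * ((1/L) * ⟪b - a, G⟫) + (1/L) ^ 2 * ‖G‖ ^ 2 := by
    rw [hbY, norm_add_sq_real, real_inner_smul_right, hsmul]
  have hC : ‖a - Y‖ ^ 2 = (1/L) ^ 2 * ‖G‖ ^ 2 := by rw [haY, hsmul]
  have hexp : a - Y = (a - p) - (Y - p) := by abel
  have hE : ‖a - p‖ ^ 2 + ‖p - Y‖ ^ 2 ≤ ‖a - Y‖ ^ 2 := by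
    have h1 : ‖a - Y‖ ^ 2 = ‖a - p‖ ^ 2 - 2 * ⟪a - p, Y - p⟫ + ‖Y - p‖ ^ 2 := by
      rw [hexp, norm_sub_sq_real]
    have h3 : ⟪a - p, Y - p⟫ = ⟪Y - p, a - p⟫ := real_inner_comm _ _
    have h4 : ‖p - Y‖ = ‖Y - p‖ := norm_sub_rev _ _
    rw [h4]
    linarith [hpa, h1, h3.ge, h3.le]
  have hα2 : α ^ 2 < 1 := by nlinarith
  have h4 : ‖b - Y‖ ^ 2 ≤ ‖a - Y‖ ^ 2 - (1 - α ^ 2) * ‖a - p‖ ^ 2 := by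
    nlinarith [hdb, hE, mul_nonneg (by linarith : (0:ℝ) ≤ 1 - α ^ 2)
      (by linarith : (0:ℝ) ≤ ‖a - Y‖ ^ 2 - ‖p - Y‖ ^ 2 - ‖a - p‖ ^ 2)]
  have hid : L/2 * ‖b - Y‖ ^ 2 - L/2 * ‖a - Y‖ ^ 2 = L/2 * ‖b - a‖ ^ 2 + ⟪b - a, G⟫ := by
    rw [hB, hC]; field_simp; ring
  have hmul := mul_le_mul_of_nonneg_left h4 (by positivity : (0:ℝ) ≤ L/2)
  have hic : ⟪G, b - a⟫ = ⟪b - a, G⟫ := real_inner_comm _ _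
  nlinarith [hA, hid, hmul, hic.le, hic.ge]

/-- For `f` differentiable, `L`-smooth and bounded below, `g` continuous
with convex image whose closure is `Z`, and a trajectory `{θ_t}` satisfying the
α-descent condition on the surrogates `ℓ_t(θ) = (1/2)‖g(θ) − (z_t − (1/L)∇f(z_t))‖²`
with `α ∈ [0,1)`, we have `z_t − z_t* → 0`, where `z_t* = Π(z_t − (1/L)∇f(z_t))` is the
Euclidean projection onto `Z`. -/
theorem stmt5 (d n : ℕ) (L : ℝ) (hL : 0 < L)
    (f : EuclideanSpace ℝ (Fin n) → ℝ) (hf : Differentiable ℝ f)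
    (hsmooth : ∀ x y, ‖gradient f x - gradient f y‖ ≤ L * ‖x - y‖)
    (hbdd : BddBelow (Set.range f))
    (g : EuclideanSpace ℝ (Fin d) → EuclideanSpace ℝ (Fin n))
    (hg : Continuous g) (hconv : Convex ℝ (Set.range g))
    (α : ℝ) (hα0 : 0 ≤ α) (hα1 : α < 1)
    (θ : ℕ → EuclideanSpace ℝ (Fin d))
    (ℓ : ℕ → EuclideanSpace ℝ (Fin d) → ℝ)
    (hℓ : ∀ t θ', ℓ t θ' =
      (1 / 2) * ‖g θ' - (g (θ t) - (1 / L) • gradient f (g (θ t)))‖ ^ 2)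
    (ℓstar : ℕ → ℝ) (hℓstar : ∀ t, ℓstar t = ⨅ θ', ℓ t θ')
    (hdesc : ∀ t, ℓ t (θ (t + 1)) - ℓstar t ≤ α ^ 2 * (ℓ t (θ t) - ℓstar t))
    (proj : ℕ → EuclideanSpace ℝ (Fin n))
    (hproj_mem : ∀ t, proj t ∈ closure (Set.range g))
    (hproj : ∀ t, ∀ z ∈ closure (Set.range g),
      ‖proj t - (g (θ t) - (1 / L) • gradient f (g (θ t)))‖ ≤
        ‖z - (g (θ t) - (1 / L) • gradient f (g (θ t)))‖) :
    Filter.Tendsto (fun t => g (θ t) - proj t) Filter.atTop (nhds 0) := by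
  have hα2 : α ^ 2 < 1 := by nlinarith
  have hbdd0 : ∀ t, BddBelow (Set.range (ℓ t)) := by
    intro t
    refine ⟨0, ?_⟩
    rintro x ⟨θ'', rfl⟩
    rw [hℓ]
    positivity
  -- ℓstar t ≤ value at the projection
  have hc : ∀ t, ℓstar t ≤
      1 / 2 * ‖proj t - (g (θ t) - (1 / L) • gradient f (g (θ t)))‖ ^ 2 := by
    intro t
    rw [hℓstar]
    refine aux_le_of_forall_pos fun ε hε => ?_
    set P := ‖proj t - (g (θ t) - (1 / L) • gradient f (g (θ t)))‖ with hP
    have hP0 : 0 ≤ P := norm_nonneg _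
    set δ := min 1 (ε / (P + 1)) with hδ
    have hδ0 : 0 < δ := lt_min one_pos (div_pos hε (by linarith))
    obtain ⟨w, hwmem, hwd⟩ := Metric.mem_closure_iff.mp (hproj_mem t) δ hδ0
    obtain ⟨θ', rfl⟩ := hwmem
    refine le_trans (ciInf_le (hbdd0 t) θ') ?_
    rw [hℓ]
    have hd' : ‖g θ' - proj t‖ < δ := by
      rw [← dist_eq_norm, dist_comm]; exact hwd
    have htri : ‖g θ' - (g (θ t) - (1 / L) • gradient f (g (θ t)))‖ ≤ δ + P := by
      have h1 : ‖g θ' - (g (θ t) - (1 / L) • gradient f (g (θ t)))‖ ≤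
          ‖g θ' - proj t‖ + P := by
        rw [hP]
        exact norm_sub_le_norm_sub_add_norm_sub _ _ _
      linarith
    have hδ1 : δ ≤ 1 := min_le_left _ _
    have hδε : δ * (P + 1) ≤ ε := by
      have h2 := min_le_right 1 (ε / (P + 1))
      calc δ * (P + 1) ≤ (ε / (P + 1)) * (P + 1) :=
            mul_le_mul_of_nonneg_right h2 (by linarith)
        _ = ε := by field_simp
    have hn : 0 ≤ ‖g θ' - (g (θ t) - (1 / L) • gradient f (g (θ t)))‖ := norm_nonneg _
    nlinarith [htri, hδ1, hδε, hδ0, hP0, hn]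
  -- projection characterization
  have hpa : ∀ t, ⟪(g (θ t) - (1 / L) • gradient f (g (θ t))) - proj t,
      g (θ t) - proj t⟫ ≤ 0 := by
    intro t
    exact aux_proj (closure (Set.range g)) hconv.closure
      (g (θ t) - (1 / L) • gradient f (g (θ t))) (proj t) (hproj_mem t)
      (hproj t) (g (θ t)) (subset_closure ⟨θ t, rfl⟩)
  -- descent condition in explicit form
  have hdb : ∀ t, (1/2) * ‖g (θ (t+1)) - (g (θ t) - (1 / L) • gradient f (g (θ t)))‖ ^ 2 ≤
      α ^ 2 * ((1/2) * ‖g (θ t) - (g (θ t) - (1 / L) • gradient f (g (θ t)))‖ ^ 2) +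
      (1 - α ^ 2) * ((1/2) * ‖proj t - (g (θ t) - (1 / L) • gradient f (g (θ t)))‖ ^ 2) := by
    intro t
    have h1 := hdesc t
    rw [hℓ t (θ (t+1)), hℓ t (θ t)] at h1
    have h2 := mul_le_mul_of_nonneg_left (hc t) (by linarith : (0:ℝ) ≤ 1 - α ^ 2)
    norm_num at h1 h2 ⊢
    linarith
  have hstep : ∀ t, f (g (θ (t+1))) + L * (1 - α ^ 2) / 2 * ‖g (θ t) - proj t‖ ^ 2 ≤
      f (g (θ t)) := fun t =>
    aux_step hL hα0 hα1 hf hsmooth (g (θ t)) (g (θ (t+1))) (proj t) (hpa t) (hdb t)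
  obtain ⟨B0, hB0⟩ := hbdd
  have hB0' : ∀ x, B0 ≤ f x := fun x => hB0 (Set.mem_range_self x)
  have hsum : ∀ N, ∑ t ∈ Finset.range N,
      (L * (1 - α ^ 2) / 2 * ‖g (θ t) - proj t‖ ^ 2) ≤ f (g (θ 0)) - B0 := by
    intro N
    have key : ∑ t ∈ Finset.range N,
        (L * (1 - α ^ 2) / 2 * ‖g (θ t) - proj t‖ ^ 2) ≤ f (g (θ 0)) - f (g (θ N)) := by
      induction N with
      | zero => simp
      | succ N ih =>
        rw [Finset.sum_range_succ]
        linarith [hstep N]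
    linarith [hB0' (g (θ N))]
  have hcpos : 0 < L * (1 - α ^ 2) / 2 := by nlinarith
  have hS : Summable (fun t => L * (1 - α ^ 2) / 2 * ‖g (θ t) - proj t‖ ^ 2) :=
    summable_of_sum_range_le (fun t => mul_nonneg hcpos.le (sq_nonneg _)) hsum
  have h2 : Filter.Tendsto (fun t => ‖g (θ t) - proj t‖ ^ 2) Filter.atTop (nhds 0) := by
    have h1 := hS.tendsto_atTop_zero
    have heq : (fun t => ‖g (θ t) - proj t‖ ^ 2) = fun t =>
        (L * (1 - α ^ 2) / 2)⁻¹ * (L * (1 - α ^ 2) / 2 * ‖g (θ t) - proj t‖ ^ 2) := by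
      funext t
      rw [← mul_assoc, inv_mul_cancel₀ hcpos.ne', one_mul]
    have h5 := h1.const_mul (L * (1 - α ^ 2) / 2)⁻¹
    rw [mul_zero] at h5
    rw [heq]
    exact h5
  have h3 : Filter.Tendsto (fun t => ‖g (θ t) - proj t‖) Filter.atTop (nhds 0) := by
    have hcomp := (Real.continuous_sqrt.tendsto' 0 0 Real.sqrt_zero).comp h2
    have heq : (fun t => ‖g (θ t) - proj t‖) =
        Real.sqrt ∘ (fun t => ‖g (θ t) - proj t‖ ^ 2) := by
      funext t
      simp [Real.sqrt_sq (norm_nonneg _)]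
    rw [heq]
    exact hcomp
  exact tendsto_zero_iff_norm_tendsto_zero.mpr h3
end

section
/- Let Z ⊆ ℝ^n be closed convex, F : ℝ^n → ℝ^n be L-smooth and μ-strongly monotone on Z with μ > 0, and let z* ∈ ri Z solve the variational inequality ⟨F(z*), z − z*⟩ ≥ 0 for all z ∈ Z. Let η ∈ (0, 2μ/L²) so that κ² = 1 − 2ημ + η²L² ∈ [0,1). Suppose z_t ∈ Z and z_{t+1} ∈ Z satisfies ‖z_{t+1} − z_t*‖ ≤ α η ‖F(z_t) − F(z*)‖ where z_t* = Π(z_t − ηF(z_t)) and α ∈ [0,1). Then ‖z_{t+1} − z*‖² ≤ (1 − 2ημ + 2αηL + (1 + α²)η²L²)‖z_t − z*‖². -/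
open scoped RealInnerProductSpace

set_option maxHeartbeats 2000000 in
/-- One-step contraction bound. With `Z` closed convex, `F` `L`-smooth and
`μ`-strongly monotone on `Z`, `z* ∈ ri Z` solving the VI, `η ∈ (0, 2μ/L²)`,
`z_t ∈ Z`, `z_{t+1} ∈ Z` with `‖z_{t+1} − z_t*‖ ≤ αη‖F(z_t) − F(z*)‖` where
`z_t* = Π(z_t − ηF(z_t))` and `α ∈ [0,1)`, we get
`‖z_{t+1} − z*‖² ≤ (1 − 2ημ + 2αηL + (1 + α²)η²L²)‖z_t − z*‖²`. -/
theorem stmt6 (n : ℕ) (Z : Set (EuclideanSpace ℝ (Fin n)))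
    (hZclosed : IsClosed Z) (hZconv : Convex ℝ Z)
    (F : EuclideanSpace ℝ (Fin n) → EuclideanSpace ℝ (Fin n))
    (L μ : ℝ) (hL : 0 < L) (hμ : 0 < μ)
    (hsmooth : ∀ x ∈ Z, ∀ y ∈ Z, ‖F x - F y‖ ≤ L * ‖x - y‖)
    (hmono : ∀ x ∈ Z, ∀ y ∈ Z, μ * ‖x - y‖ ^ 2 ≤ ⟪F x - F y, x - y⟫)
    (zs : EuclideanSpace ℝ (Fin n)) (hzs : zs ∈ Z)
    (hri : ∀ z ∈ Z, ∃ lam : ℝ, 1 < lam ∧ (1 - lam) • z + lam • zs ∈ Z)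
    (hsol : ∀ z ∈ Z, 0 ≤ ⟪F zs, z - zs⟫)
    (η α : ℝ) (hη0 : 0 < η) (hη : η < 2 * μ / L ^ 2)
    (hα0 : 0 ≤ α) (hα1 : α < 1)
    (zt znext ztproj : EuclideanSpace ℝ (Fin n))
    (hzt : zt ∈ Z) (hznext : znext ∈ Z)
    (hproj_mem : ztproj ∈ Z)
    (hproj : ∀ z ∈ Z, ‖ztproj - (zt - η • F zt)‖ ≤ ‖z - (zt - η • F zt)‖)
    (hbias : ‖znext - ztproj‖ ≤ α * η * ‖F zt - F zs‖) :
    ‖znext - zs‖ ^ 2 ≤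
      (1 - 2 * η * μ + 2 * α * η * L + (1 + α ^ 2) * η ^ 2 * L ^ 2) * ‖zt - zs‖ ^ 2 := by
  set w := zt - η • F zt with hw
  -- projection characterization
  have hchar : ∀ z ∈ Z, ⟪w - ztproj, z - ztproj⟫ ≤ 0 := by
    intro z hz
    set a := ⟪w - ztproj, z - ztproj⟫ with ha
    set b := ‖z - ztproj‖ ^ 2 with hbdef
    have hb0 : 0 ≤ b := sq_nonneg _
    have hkey : ∀ t : ℝ, 0 < t → t ≤ 1 → 2 * t * a ≤ t ^ 2 * b := by
      intro t ht0 ht1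
      have hmem : ztproj + t • (z - ztproj) ∈ Z := by
        have := hZconv hproj_mem hz (by linarith : (0:ℝ) ≤ 1 - t) (le_of_lt ht0)
          (by ring)
        convert this using 1
        module
      have h1 := hproj _ hmem
      have h2 : ‖ztproj - w‖ ^ 2 ≤ ‖(ztproj - w) + t • (z - ztproj)‖ ^ 2 := by
        have h3 : ztproj + t • (z - ztproj) - w = (ztproj - w) + t • (z - ztproj) := by
          module
        rw [← h3]
        exact pow_le_pow_left₀ (norm_nonneg _) h1 2
      rw [norm_add_sq_real, real_inner_smul_right, norm_smul, mul_pow] at h2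
      have h4 : ⟪ztproj - w, z - ztproj⟫ = -a := by
        rw [ha, ← inner_neg_left]; congr 1; module
      rw [h4] at h2
      have : ‖t‖ ^ 2 = t ^ 2 := by rw [Real.norm_eq_abs, sq_abs]
      rw [this] at h2
      nlinarith [sq_nonneg (‖ztproj - w‖)]
    by_contra h
    push_neg at h
    rcases eq_or_lt_of_le hb0 with hb | hb
    · have := hkey 1 one_pos le_rfl
      nlinarith
    · set t := min 1 (a / b) with htdef
      have ht0 : 0 < t := lt_min one_pos (div_pos h hb)
      have ht1 : t ≤ 1 := min_le_left _ _
      have htb : t * b ≤ a := by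
        have : t ≤ a / b := min_le_right _ _
        calc t * b ≤ (a / b) * b := by nlinarith
        _ = a := by field_simp
      have := hkey t ht0 ht1
      nlinarith
  -- combine with VI solution
  set d := ztproj - zs with hd
  set u := (zt - zs) - η • (F zt - F zs) with hu
  have h1 : ⟪w - ztproj, zs - ztproj⟫ ≤ 0 := hchar zs hzs
  have h2 : 0 ≤ ⟪F zs, ztproj - zs⟫ := hsol ztproj hproj_mem
  have hdu : ‖d‖ ^ 2 ≤ ⟪u, d⟫ := by
    have hsplit : ⟪w - ztproj, zs - ztproj⟫
        = -⟪u, d⟫ + ‖d‖ ^ 2 + η * ⟪F zs, ztproj - zs⟫ := by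
      rw [hw, hu, hd, ← real_inner_self_eq_norm_sq]
      have e1 : zt - η • F zt - ztproj
          = ((zt - zs) - η • (F zt - F zs)) - (ztproj - zs) - η • F zs := by
        module
      have e2 : zs - ztproj = -(ztproj - zs) := by module
      rw [e1, e2, inner_neg_right, inner_sub_left, inner_sub_left,
        real_inner_smul_left]
      have e3 : ⟪F zs, ztproj - zs⟫ = ⟪(F zs : EuclideanSpace ℝ (Fin n)), ztproj - zs⟫ := rfl
      ring
    nlinarith [mul_nonneg (le_of_lt hη0) h2]
  have hdn : ‖d‖ ≤ ‖u‖ := by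
    have hcs := real_inner_le_norm u d
    rcases eq_or_lt_of_le (norm_nonneg d) with h0 | h0
    · rw [← h0]; exact norm_nonneg u
    · nlinarith
  -- contraction bound on ‖u‖
  have hmono' := hmono zt hzt zs hzs
  have hsm := hsmooth zt hzt zs hzs
  have hsm2 : ‖F zt - F zs‖ ^ 2 ≤ L ^ 2 * ‖zt - zs‖ ^ 2 := by
    nlinarith [norm_nonneg (F zt - F zs), norm_nonneg (zt - zs)]
  have hun : ‖u‖ ^ 2 ≤ (1 - 2 * η * μ + η ^ 2 * L ^ 2) * ‖zt - zs‖ ^ 2 := by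
    have : ‖u‖ ^ 2 = ‖zt - zs‖ ^ 2 - 2 * η * ⟪F zt - F zs, zt - zs⟫
        + η ^ 2 * ‖F zt - F zs‖ ^ 2 := by
      rw [hu, norm_sub_sq_real, real_inner_smul_right, norm_smul, mul_pow,
        Real.norm_eq_abs, sq_abs, real_inner_comm]
      ring
    have ha : 2 * η * (μ * ‖zt - zs‖ ^ 2) ≤ 2 * η * ⟪F zt - F zs, zt - zs⟫ :=
      mul_le_mul_of_nonneg_left hmono' (by positivity)
    have hb : η ^ 2 * ‖F zt - F zs‖ ^ 2 ≤ η ^ 2 * (L ^ 2 * ‖zt - zs‖ ^ 2) :=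
      mul_le_mul_of_nonneg_left hsm2 (by positivity)
    calc ‖u‖ ^ 2 = ‖zt - zs‖ ^ 2 - 2 * η * ⟪F zt - F zs, zt - zs⟫
          + η ^ 2 * ‖F zt - F zs‖ ^ 2 := this
      _ ≤ ‖zt - zs‖ ^ 2 - 2 * η * (μ * ‖zt - zs‖ ^ 2)
          + η ^ 2 * (L ^ 2 * ‖zt - zs‖ ^ 2) := by linarith
      _ = (1 - 2 * η * μ + η ^ 2 * L ^ 2) * ‖zt - zs‖ ^ 2 := by ring
  -- κ² ≤ 1
  have hκ : η ^ 2 * L ^ 2 ≤ 2 * η * μ := by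
    have hηL : η * L ^ 2 < 2 * μ := by
      rw [div_eq_mul_inv] at hη
      calc η * L ^ 2 < (2 * μ * (L ^ 2)⁻¹) * L ^ 2 := by
            apply mul_lt_mul_of_pos_right hη (by positivity)
        _ = 2 * μ := by field_simp
    nlinarith
  have hur : ‖u‖ ≤ ‖zt - zs‖ := by
    have : ‖u‖ ^ 2 ≤ ‖zt - zs‖ ^ 2 := by nlinarith
    nlinarith [norm_nonneg u, norm_nonneg (zt - zs)]
  -- final triangle inequality
  have htri : ‖znext - zs‖ ≤ ‖d‖ + α * η * L * ‖zt - zs‖ := by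
    calc ‖znext - zs‖ ≤ ‖znext - ztproj‖ + ‖ztproj - zs‖ := by
          have : znext - zs = (znext - ztproj) + (ztproj - zs) := by module
          rw [this]; exact norm_add_le _ _
      _ ≤ α * η * ‖F zt - F zs‖ + ‖d‖ := by rw [hd]; exact add_le_add hbias le_rfl
      _ ≤ α * η * (L * ‖zt - zs‖) + ‖d‖ := by
          exact add_le_add (mul_le_mul_of_nonneg_left hsm (by positivity)) le_rfl
      _ = ‖d‖ + α * η * L * ‖zt - zs‖ := by ring
  have hnn : (0:ℝ) ≤ ‖znext - zs‖ := norm_nonneg _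
  have hsq : ‖znext - zs‖ ^ 2 ≤ (‖d‖ + α * η * L * ‖zt - zs‖) ^ 2 :=
    pow_le_pow_left₀ hnn htri 2
  have hd2 : ‖d‖ ^ 2 ≤ (1 - 2 * η * μ + η ^ 2 * L ^ 2) * ‖zt - zs‖ ^ 2 := by
    have : ‖d‖ ^ 2 ≤ ‖u‖ ^ 2 := by nlinarith [norm_nonneg d, norm_nonneg u]
    linarith
  have hdr : ‖d‖ ≤ ‖zt - zs‖ := hdn.trans hur
  have hc : 0 ≤ α * η * L * ‖zt - zs‖ := by positivity
  have hmid : α * η * L * ‖zt - zs‖ * ‖d‖ ≤ α * η * L * ‖zt - zs‖ * ‖zt - zs‖ :=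
    mul_le_mul_of_nonneg_left hdr hc
  nlinarith [hsq, hd2, hmid]
end

section
/- Let Z ⊆ ℝ^n be closed convex, F : ℝ^n → ℝ^n be L-smooth and μ-strongly monotone on Z with μ > 0, z* ∈ ri Z a solution of the variational inequality over Z, and let g : ℝ^d → ℝ^n be continuous with convex image whose closure is Z. Fix α with 0 ≤ α < μ/L and a stepsize η satisfying 0 < η < 2(μ − αL)/((1 + α²)L²). Then any trajectory {θ_t} satisfying the α-descent condition on the surrogates ℓ_t(θ) = (1/2)‖g(θ) − (z_t − ηF(z_t))‖², z_t = g(θ_t), yields iterates z_t = g(θ_t) converging linearly to z*: there exists ρ ∈ [0,1) such that ‖z_{t+1} − z*‖² ≤ ρ‖z_t − z*‖² for all t. -/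
open scoped RealInnerProductSpace

set_option maxHeartbeats 1000000 in


private lemma iInf_half_sq_le {ι : Type*} [Nonempty ι] {E : Type*} [NormedAddCommGroup E]
    (f : ι → E) (y P : E) (hP : P ∈ closure (Set.range f)) :
    (⨅ i, (1/2 : ℝ) * ‖f i - y‖ ^ 2) ≤ (1/2) * ‖P - y‖ ^ 2 := by
  have hbdd : BddBelow (Set.range fun i => (1/2 : ℝ) * ‖f i - y‖ ^ 2) := by
    refine ⟨0, ?_⟩
    rintro x ⟨i, rfl⟩
    positivity
  refine le_of_forall_pos_le_add fun ε hε => ?_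
  have hcont : Continuous fun x : E => (1/2 : ℝ) * ‖x - y‖ ^ 2 :=
    continuous_const.mul (((continuous_id.sub continuous_const).norm).pow 2)
  obtain ⟨δ, hδ, hδ'⟩ := Metric.continuousAt_iff.mp (hcont.continuousAt (x := P)) ε hε
  obtain ⟨x, hx, hxP⟩ := Metric.mem_closure_iff.mp hP δ hδ
  obtain ⟨i, rfl⟩ := hx
  have h2 : dist ((1/2 : ℝ) * ‖f i - y‖ ^ 2) ((1/2) * ‖P - y‖ ^ 2) < ε :=
    hδ' (by rwa [dist_comm] at hxP)
  have h3 : (1/2 : ℝ) * ‖f i - y‖ ^ 2 < (1/2) * ‖P - y‖ ^ 2 + ε := by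
    have := (abs_lt.mp (by simpa [Real.dist_eq] using h2)).2
    linarith
  exact le_of_lt (lt_of_le_of_lt (ciInf_le hbdd i) h3)

set_option maxHeartbeats 1000000 in


private lemma key_step {n : ℕ} (Z : Set (EuclideanSpace ℝ (Fin n)))
    (hZconv : Convex ℝ Z) (hZclosed : IsClosed Z)
    (F : EuclideanSpace ℝ (Fin n) → EuclideanSpace ℝ (Fin n))
    (L μ η α : ℝ) (hL : 0 < L) (hη0 : 0 < η) (hα0 : 0 ≤ α)
    (zs : EuclideanSpace ℝ (Fin n)) (hzs : zs ∈ Z)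
    (hsmooth : ∀ x ∈ Z, ∀ y ∈ Z, ‖F x - F y‖ ≤ L * ‖x - y‖)
    (hmono : ∀ x ∈ Z, ∀ y ∈ Z, μ * ‖x - y‖ ^ 2 ≤ ⟪F x - F y, x - y⟫)
    (horth : ∀ z ∈ Z, ⟪F zs, z - zs⟫ = 0)
    (zt zt1 : EuclideanSpace ℝ (Fin n)) (hzt : zt ∈ Z) (hzt1 : zt1 ∈ Z)
    (lt1 lt ls : ℝ)
    (hlt1 : lt1 = (1/2) * ‖zt1 - (zt - η • F zt)‖ ^ 2)
    (hlt : lt = (1/2) * ‖zt - (zt - η • F zt)‖ ^ 2)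
    (hls_le : ∀ w ∈ Z, ls ≤ (1/2) * ‖w - (zt - η • F zt)‖ ^ 2)
    (hls_ge : ∀ c : ℝ, (∀ z ∈ Z, c ≤ (1/2) * ‖z - (zt - η • F zt)‖ ^ 2) → c ≤ ls)
    (hdesc : lt1 - ls ≤ α ^ 2 * (lt - ls)) :
    ‖zt1 - zs‖ ≤ (α * η * L + Real.sqrt (1 - 2*η*μ + η^2*L^2)) * ‖zt - zs‖ := by
  set r : ℝ := ‖zt - zs‖ with hr
  set s : ℝ := 1 - 2*η*μ + η^2*L^2 with hs
  set y : EuclideanSpace ℝ (Fin n) := zt - η • F zt with hy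
  set ys : EuclideanSpace ℝ (Fin n) := zs - η • F zs with hys
  have hr0 : 0 ≤ r := norm_nonneg _
  -- step 1 : ‖y - ys‖^2 ≤ s * r^2
  have hyys : ‖y - ys‖ ^ 2 ≤ s * r ^ 2 := by
    have hsub : y - ys = (zt - zs) - η • (F zt - F zs) := by
      rw [hy, hys, smul_sub]; abel
    have hexp : ‖y - ys‖ ^ 2 = ‖zt - zs‖ ^ 2 - 2 * ⟪zt - zs, η • (F zt - F zs)⟫
        + ‖η • (F zt - F zs)‖ ^ 2 := by
      rw [hsub, norm_sub_sq_real]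
    have hinner : η * (μ * r ^ 2) ≤ ⟪zt - zs, η • (F zt - F zs)⟫ := by
      rw [real_inner_smul_right]
      have := hmono zt hzt zs hzs
      have h2 : ⟪zt - zs, F zt - F zs⟫ = ⟪F zt - F zs, zt - zs⟫ := real_inner_comm _ _
      rw [h2]
      exact mul_le_mul_of_nonneg_left (by simpa [hr] using this) hη0.le
    have hnorm2 : ‖η • (F zt - F zs)‖ ^ 2 ≤ η ^ 2 * (L ^ 2 * r ^ 2) := by
      rw [norm_smul, Real.norm_eq_abs, abs_of_pos hη0, mul_pow]
      have h1 : ‖F zt - F zs‖ ≤ L * r := by simpa [hr] using hsmooth zt hzt zs hzs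
      have h2 : ‖F zt - F zs‖ ^ 2 ≤ (L * r) ^ 2 :=
        pow_le_pow_left₀ (norm_nonneg _) h1 2
      nlinarith [sq_nonneg η]
    rw [hexp, hs]
    nlinarith
  -- projection of y on Z
  have hZcomp : IsComplete Z := hZclosed.isComplete
  obtain ⟨P, hPZ, hPmin⟩ := exists_norm_eq_iInf_of_complete_convex ⟨zs, hzs⟩ hZcomp hZconv y
  have hPproj : ∀ w ∈ Z, ⟪y - P, w - P⟫ ≤ 0 :=
    (norm_eq_iInf_iff_real_inner_le_zero hZconv hPZ).mp hPmin
  -- step 2 : ‖P - zs‖^2 ≤ ‖y - ys‖^2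
  have hb2 : ‖P - zs‖ ^ 2 ≤ ‖y - ys‖ ^ 2 := by
    have h1 : ⟪P - y, P - zs⟫ ≤ 0 := by
      have := hPproj zs hzs
      rw [show P - y = -(y - P) by abel, show P - zs = -(zs - P) by abel, inner_neg_neg]
      exact this
    have h3 : ⟪ys - zs, P - zs⟫ = 0 := by
      rw [show ys - zs = (-η) • F zs by rw [hys]; rw [neg_smul]; abel,
        real_inner_smul_left, horth P hPZ, mul_zero]
    have e : ⟪P - zs, P - zs⟫ = ⟪P - y, P - zs⟫ + ⟪y - ys, P - zs⟫ + ⟪ys - zs, P - zs⟫ := by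
      rw [← inner_add_left, ← inner_add_left]
      congr 1
      abel
    have h4 : ‖P - zs‖ ^ 2 ≤ ⟪y - ys, P - zs⟫ := by
      rw [← real_inner_self_eq_norm_sq]
      rw [e] at *
      linarith [e, h1, h3]
    have h5 : ⟪y - ys, P - zs⟫ ≤ ‖y - ys‖ * ‖P - zs‖ := real_inner_le_norm _ _
    nlinarith [sq_nonneg (‖y - ys‖ - ‖P - zs‖), norm_nonneg (P - zs), norm_nonneg (y - ys)]
  -- span subspace
  set V : Submodule ℝ (EuclideanSpace ℝ (Fin n)) :=
    Submodule.span ℝ ((fun z => z - zs) '' Z) with hV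
  have hVmem : ∀ z ∈ Z, z - zs ∈ V := fun z hz => Submodule.subset_span ⟨z, hz, rfl⟩
  have hFzs : F zs ∈ Vᗮ := by
    rw [Submodule.mem_orthogonal]
    intro u hu
    induction hu using Submodule.span_induction with
    | mem x hx =>
      obtain ⟨z, hz, rfl⟩ := hx
      rw [real_inner_comm]
      exact horth z hz
    | zero => simp
    | add x y _ _ hx hy => rw [inner_add_left, hx, hy, add_zero]
    | smul r x _ hx => rw [real_inner_smul_left, hx, mul_zero]
  -- decomposition of u := η • F zt
  set u : EuclideanSpace ℝ (Fin n) := η • F zt with hu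
  set v : EuclideanSpace ℝ (Fin n) := (Submodule.orthogonalProjectionOnto V u : EuclideanSpace ℝ (Fin n))
    with hv
  set w : EuclideanSpace ℝ (Fin n) := u - v with hw
  have hworth : w ∈ Vᗮ := Submodule.sub_starProjection_mem_orthogonal u
  have hvV : v ∈ V := (Submodule.orthogonalProjectionOnto V u).2
  -- lower bound for ls
  have hlsw : (1/2) * ‖w‖ ^ 2 ≤ ls := by
    refine hls_ge _ fun z hz => ?_
    have hdec : z - y = ((z - zt) + v) + w := by
      rw [hy, hw]; abel
    have hmemV : (z - zt) + v ∈ V := by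
      have : z - zt = (z - zs) - (zt - zs) := by abel
      rw [this]
      exact V.add_mem (V.sub_mem (hVmem z hz) (hVmem zt hzt)) hvV
    have hinner0 : ⟪(z - zt) + v, w⟫ = 0 :=
      Submodule.inner_right_of_mem_orthogonal hmemV hworth
    have : ‖z - y‖ ^ 2 = ‖(z - zt) + v‖ ^ 2 + ‖w‖ ^ 2 := by
      rw [hdec, norm_add_sq_real, hinner0]
      ring
    nlinarith [sq_nonneg ‖(z - zt) + v‖]
  -- Pythagoras : ‖u‖^2 = ‖v‖^2 + ‖w‖^2
  have hpyth : ‖u‖ ^ 2 = ‖v‖ ^ 2 + ‖w‖ ^ 2 := by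
    have hdec : u = v + w := by rw [hw]; abel
    have hinner0 : ⟪v, w⟫ = 0 := Submodule.inner_right_of_mem_orthogonal hvV hworth
    rw [hdec, norm_add_sq_real, hinner0]
    ring
  -- gap bound : lt - ls ≤ (1/2) * ‖v‖^2
  have hgap : lt - ls ≤ (1/2) * ‖v‖ ^ 2 := by
    have h1 : lt = (1/2) * ‖u‖ ^ 2 := by
      rw [hlt, hu]
      congr 2
      rw [show zt - (zt - η • F zt) = η • F zt by abel]
    rw [h1, hpyth]
    linarith [hlsw]
  -- ‖v‖ ≤ η * (L * r)
  have hvle : ‖v‖ ≤ η * (L * r) := by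
    have hs0 : η • F zs ∈ Vᗮ := Vᗮ.smul_mem η hFzs
    have hsplit : u = η • (F zt - F zs) + η • F zs := by
      rw [hu, smul_sub]; abel
    have hproj : v = (Submodule.orthogonalProjectionOnto V (η • (F zt - F zs)) :
        EuclideanSpace ℝ (Fin n)) := by
      rw [hv, hsplit, map_add, Submodule.orthogonalProjectionOnto_eq_zero_iff.mpr hs0, add_zero]
    have hle : ‖v‖ ≤ ‖η • (F zt - F zs)‖ := by
      rw [hproj]
      calc ‖(Submodule.orthogonalProjectionOnto V (η • (F zt - F zs)) : EuclideanSpace ℝ (Fin n))‖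
          = ‖Submodule.orthogonalProjectionOnto V (η • (F zt - F zs))‖ := rfl
        _ ≤ ‖Submodule.orthogonalProjectionOnto V‖ * ‖η • (F zt - F zs)‖ :=
            (Submodule.orthogonalProjectionOnto V).le_opNorm _
        _ ≤ 1 * ‖η • (F zt - F zs)‖ :=
            mul_le_mul_of_nonneg_right (Submodule.orthogonalProjectionOnto_norm_le V) (norm_nonneg _)
        _ = ‖η • (F zt - F zs)‖ := one_mul _
    refine hle.trans ?_
    rw [norm_smul, Real.norm_eq_abs, abs_of_pos hη0]
    exact mul_le_mul_of_nonneg_left (by simpa [hr] using hsmooth zt hzt zs hzs) hη0.le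
  -- descent gives ‖zt1 - P‖ bound
  have ha2 : ‖zt1 - P‖ ^ 2 ≤ (α * η * L * r) ^ 2 := by
    have hdec : zt1 - y = (zt1 - P) + (P - y) := by abel
    have hinner : 0 ≤ ⟪zt1 - P, P - y⟫ := by
      have := hPproj zt1 hzt1
      have h2 : ⟪zt1 - P, P - y⟫ = -⟪y - P, zt1 - P⟫ := by
        rw [show P - y = -(y - P) by abel, inner_neg_right, real_inner_comm]
      rw [h2]
      linarith
    have h1 : (1/2) * ‖zt1 - P‖ ^ 2 + (1/2) * ‖P - y‖ ^ 2 ≤ lt1 := by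
      rw [hlt1, hdec, norm_add_sq_real]
      nlinarith
    have h2 : ls ≤ (1/2) * ‖P - y‖ ^ 2 := by
      exact hls_le P hPZ
    have h3 : (1/2) * ‖zt1 - P‖ ^ 2 ≤ lt1 - ls := by linarith
    have h4 : lt1 - ls ≤ α ^ 2 * ((1/2) * ‖v‖ ^ 2) := by
      refine hdesc.trans (mul_le_mul_of_nonneg_left hgap (sq_nonneg α))
    have h5 : ‖v‖ ^ 2 ≤ (η * (L * r)) ^ 2 := pow_le_pow_left₀ (norm_nonneg _) hvle 2
    nlinarith [sq_nonneg α]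
  have ha : ‖zt1 - P‖ ≤ α * η * L * r := by
    have h0 : 0 ≤ α * η * L * r := by positivity
    nlinarith [norm_nonneg (zt1 - P)]
  -- ‖P - zs‖ ≤ sqrt s * r
  have hbb : ‖P - zs‖ ≤ Real.sqrt s * r := by
    have hb2' : ‖P - zs‖ ^ 2 ≤ s * r ^ 2 := hb2.trans hyys
    rcases le_or_gt 0 s with hs0 | hs0
    · calc ‖P - zs‖ = Real.sqrt (‖P - zs‖ ^ 2) := (Real.sqrt_sq (norm_nonneg _)).symm
        _ ≤ Real.sqrt (s * r ^ 2) := Real.sqrt_le_sqrt hb2'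
        _ = Real.sqrt s * r := by rw [Real.sqrt_mul hs0, Real.sqrt_sq hr0]
    · have h1 : s * r ^ 2 ≤ 0 := mul_nonpos_of_nonpos_of_nonneg hs0.le (sq_nonneg r)
      have h2 : ‖P - zs‖ ^ 2 = 0 := le_antisymm (hb2'.trans h1) (sq_nonneg _)
      have h3 : ‖P - zs‖ = 0 := by
        have := pow_eq_zero_iff (n := 2) (by norm_num) |>.mp h2
        exact this
      rw [h3]
      positivity
  -- conclude
  have htri : ‖zt1 - zs‖ ≤ ‖zt1 - P‖ + ‖P - zs‖ := by
    have : zt1 - zs = (zt1 - P) + (P - zs) := by abel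
    rw [this]
    exact norm_add_le _ _
  calc ‖zt1 - zs‖ ≤ ‖zt1 - P‖ + ‖P - zs‖ := htri
    _ ≤ α * η * L * r + Real.sqrt s * r := add_le_add ha hbb
    _ = (α * η * L + Real.sqrt s) * r := by ring

set_option maxHeartbeats 1000000 in
/-- Deterministic linear convergence (case `α < μ/L` of Theorem 1).
With `Z = closure {g(θ)}` closed convex, `F` `L`-smooth and `μ`-strongly monotone on
`Z`, `z* ∈ ri Z` a VI solution, `0 ≤ α < μ/L`, and
`0 < η < 2(μ − αL)/((1 + α²)L²)`, any trajectory satisfying the α-descent condition on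
the surrogates `ℓ_t(θ) = (1/2)‖g(θ) − (z_t − ηF(z_t))‖²` has iterates `z_t = g(θ_t)`
converging linearly: there exists `ρ ∈ [0,1)` with `‖z_{t+1} − z*‖² ≤ ρ‖z_t − z*‖²`. -/
theorem stmt7 (d n : ℕ)
    (g : EuclideanSpace ℝ (Fin d) → EuclideanSpace ℝ (Fin n))
    (hg : Continuous g) (hconv : Convex ℝ (Set.range g))
    (F : EuclideanSpace ℝ (Fin n) → EuclideanSpace ℝ (Fin n))
    (L μ : ℝ) (hL : 0 < L) (hμ : 0 < μ)
    (hsmooth : ∀ x ∈ closure (Set.range g), ∀ y ∈ closure (Set.range g),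
      ‖F x - F y‖ ≤ L * ‖x - y‖)
    (hmono : ∀ x ∈ closure (Set.range g), ∀ y ∈ closure (Set.range g),
      μ * ‖x - y‖ ^ 2 ≤ ⟪F x - F y, x - y⟫)
    (zs : EuclideanSpace ℝ (Fin n)) (hzs : zs ∈ closure (Set.range g))
    (hri : ∀ z ∈ closure (Set.range g), ∃ lam : ℝ, 1 < lam ∧
      (1 - lam) • z + lam • zs ∈ closure (Set.range g))
    (hsol : ∀ z ∈ closure (Set.range g), 0 ≤ ⟪F zs, z - zs⟫)
    (α : ℝ) (hα0 : 0 ≤ α) (hα : α < μ / L)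
    (η : ℝ) (hη0 : 0 < η) (hη : η < 2 * (μ - α * L) / ((1 + α ^ 2) * L ^ 2))
    (θ : ℕ → EuclideanSpace ℝ (Fin d))
    (ℓ : ℕ → EuclideanSpace ℝ (Fin d) → ℝ)
    (hℓ : ∀ t θ', ℓ t θ' =
      (1 / 2) * ‖g θ' - (g (θ t) - η • F (g (θ t)))‖ ^ 2)
    (ℓstar : ℕ → ℝ) (hℓstar : ∀ t, ℓstar t = ⨅ θ', ℓ t θ')
    (hdesc : ∀ t, ℓ t (θ (t + 1)) - ℓstar t ≤ α ^ 2 * (ℓ t (θ t) - ℓstar t)) :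
    ∃ ρ : ℝ, 0 ≤ ρ ∧ ρ < 1 ∧
      ∀ t, ‖g (θ (t + 1)) - zs‖ ^ 2 ≤ ρ * ‖g (θ t) - zs‖ ^ 2 := by
  have hmemZ : ∀ x, g x ∈ closure (Set.range g) := fun x => subset_closure ⟨x, rfl⟩
  -- orthogonality of F zs to Z - zs
  have horth : ∀ z ∈ closure (Set.range g), ⟪F zs, z - zs⟫ = 0 := by
    intro z hz
    obtain ⟨lam, hlam, hmem⟩ := hri z hz
    have h1 := hsol _ hmem
    have h2 : ((1 - lam) • z + lam • zs) - zs = (1 - lam) • (z - zs) := by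
      module
    rw [h2, real_inner_smul_right] at h1
    have h3 := hsol z hz
    nlinarith
  by_cases hsing : ∀ x ∈ closure (Set.range g), x = zs
  · refine ⟨1/2, by norm_num, by norm_num, fun t => ?_⟩
    have h1 : g (θ (t+1)) = zs := hsing _ (hmemZ _)
    have h2 : g (θ t) = zs := hsing _ (hmemZ _)
    rw [h1, h2]
    simp
  push_neg at hsing
  obtain ⟨x₀, hx₀Z, hx₀⟩ := hsing
  have hμL : μ ≤ L := by
    have h1 := hmono x₀ hx₀Z zs hzs
    have h2 := hsmooth x₀ hx₀Z zs hzs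
    have h3 : 0 < ‖x₀ - zs‖ := by
      rw [norm_pos_iff]
      exact sub_ne_zero.mpr hx₀
    have h4 : ⟪F x₀ - F zs, x₀ - zs⟫ ≤ ‖F x₀ - F zs‖ * ‖x₀ - zs‖ := real_inner_le_norm _ _
    have h5 : ‖F x₀ - F zs‖ * ‖x₀ - zs‖ ≤ L * ‖x₀ - zs‖ * ‖x₀ - zs‖ :=
      mul_le_mul_of_nonneg_right h2 (norm_nonneg _)
    have h6 : 0 < ‖x₀ - zs‖ ^ 2 := pow_pos h3 2
    nlinarith
  have hαL : α * L < μ := by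
    rw [lt_div_iff₀ hL] at hα
    linarith
  have hkey : η * ((1 + α ^ 2) * L ^ 2) < 2 * (μ - α * L) := by
    rw [lt_div_iff₀ (by positivity)] at hη
    linarith
  set s : ℝ := 1 - 2*η*μ + η^2*L^2 with hs
  set A : ℝ := α * η * L with hA
  have hA0 : 0 ≤ A := by positivity
  have hA1 : A < 1 := by
    rw [hA]
    by_contra hcon
    push_neg at hcon
    have p1 : 0 ≤ α * (2 * (μ - α * L) - η * ((1 + α ^ 2) * L ^ 2)) :=
      mul_nonneg hα0 (by linarith)
    have h7 : 0 ≤ α * (L - μ) := mul_nonneg hα0 (by linarith)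
    have h8 : (0:ℝ) < (1 + α ^ 2) * L := by positivity
    have h9 : (1 + α ^ 2) * L ≤ (α * η * L) * ((1 + α ^ 2) * L) :=
      le_mul_of_one_le_left h8.le hcon
    have h10 : (0:ℝ) < 3 * α ^ 2 - 2 * α + 1 := by nlinarith [sq_nonneg (α - 1), sq_nonneg α]
    nlinarith [mul_pos hL h10]
  have hslt : s < (1 - A) ^ 2 := by
    have p2 : η * (η * ((1 + α ^ 2) * L ^ 2)) < η * (2 * (μ - α * L)) :=
      mul_lt_mul_of_pos_left hkey hη0
    rw [hs, hA]
    nlinarith [sq_nonneg (α * η * L)]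
  have hsqrt : Real.sqrt s < 1 - A := (Real.sqrt_lt' (by linarith)).mpr hslt
  have hsqrt0 : 0 ≤ Real.sqrt s := Real.sqrt_nonneg s
  refine ⟨(A + Real.sqrt s) ^ 2, by positivity, ?_, fun t => ?_⟩
  · nlinarith
  · -- apply key_step
    have hstep := key_step (closure (Set.range g)) hconv.closure isClosed_closure F
      L μ η α hL hη0 hα0 zs hzs hsmooth hmono horth
      (g (θ t)) (g (θ (t+1))) (hmemZ _) (hmemZ _)
      (ℓ t (θ (t+1))) (ℓ t (θ t)) (ℓstar t)
      (hℓ t (θ (t+1))) (hℓ t (θ t))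
      (fun w hw => by
        rw [hℓstar]
        have := iInf_half_sq_le g (g (θ t) - η • F (g (θ t))) w hw
        calc (⨅ θ', ℓ t θ') = ⨅ θ', (1/2 : ℝ) * ‖g θ' - (g (θ t) - η • F (g (θ t)))‖ ^ 2 := by
              simp only [hℓ]
          _ ≤ (1/2) * ‖w - (g (θ t) - η • F (g (θ t)))‖ ^ 2 := this)
      (fun c hc => by
        rw [hℓstar]
        refine le_ciInf fun θ' => ?_
        rw [hℓ]
        exact hc _ (hmemZ θ'))
      (hdesc t)
    have hrhs : 0 ≤ (A + Real.sqrt s) * ‖g (θ t) - zs‖ := by positivity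
    calc ‖g (θ (t+1)) - zs‖ ^ 2 ≤ ((A + Real.sqrt s) * ‖g (θ t) - zs‖) ^ 2 := by
          have h := hstep
          rw [← hA, ← hs] at h
          exact pow_le_pow_left₀ (norm_nonneg _) h 2
      _ = (A + Real.sqrt s) ^ 2 * ‖g (θ t) - zs‖ ^ 2 := by ring
end

section
/- Let μ > 0, L > 0, C > 0, p > 0. Then there exists η̄ > 0 such that for every η ∈ (0, η̄), setting α = Cη^p one has 1 − 2ημ + 2αηL + (1 + α²)η²L² < 1. Consequently, under the hypotheses of the deterministic convergence theorem (Z closed convex, F L-smooth and μ-strongly monotone, solution z* in the relative interior of Z), any trajectory satisfying the α-descent condition with α ≤ Cη^p and η < η̄ has iterates z_t = g(θ_t) converging linearly to z*. -/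
open scoped RealInnerProductSpace

private lemma aux_le_of_sq_le {a b : ℝ} (ha : 0 ≤ a) (hb : 0 ≤ b) (h : a ^ 2 ≤ b ^ 2) :
    a ≤ b := by nlinarith

private lemma aux_r0 (η μ L : ℝ) (h : η * (2 * μ) < 1) :
    0 ≤ 1 - 2 * η * μ + η ^ 2 * L ^ 2 := by nlinarith [sq_nonneg (η * L)]

private lemma aux_r1 (η μ L β : ℝ) (hβ : 0 < β) (hη : 0 < η) (hL : 0 < L)
    (hkey : 2 * β * η * L + (1 + β ^ 2) * η ^ 2 * L ^ 2 < 2 * η * μ) :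
    1 - 2 * η * μ + η ^ 2 * L ^ 2 ≤ 1 := by
  nlinarith [sq_nonneg β, mul_pos hβ (mul_pos hη hL),
    mul_nonneg (mul_nonneg (sq_nonneg β) (sq_nonneg η)) (sq_nonneg L)]

private lemma aux_rho (α β η L s μ : ℝ) (hα : 0 ≤ α) (hαβ : α ≤ β) (hη : 0 < η) (hL : 0 < L)
    (hs0 : 0 ≤ s) (hs1 : s ≤ 1) (hs2 : s ^ 2 = 1 - 2 * η * μ + η ^ 2 * L ^ 2)
    (hkey : 2 * β * η * L + (1 + β ^ 2) * η ^ 2 * L ^ 2 < 2 * η * μ) :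
    (α * η * L + s) ^ 2 < 1 := by
  have hβ0 : 0 ≤ β := hα.trans hαβ
  have h1 : α ^ 2 ≤ β ^ 2 := by nlinarith
  have h2 : α * η * L * s ≤ β * η * L := by
    nlinarith [mul_pos hη hL, mul_nonneg (mul_nonneg hα hη.le) hL.le]
  nlinarith [mul_le_mul_of_nonneg_right h1 (mul_nonneg (sq_nonneg η) (sq_nonneg L))]

private lemma aux_desc (A B P d2 K m α : ℝ)
    (hd : (1 / 2) * (A + K) - m ≤ α ^ 2 * ((1 / 2) * (B + K) - m))
    (hmA : (1 / 2) * (d2 + K) ≤ m) (hmB : m ≤ (1 / 2) * (d2 + K))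
    (hob : P + d2 ≤ A) (hd2 : 0 ≤ d2) : P ≤ α ^ 2 * B := by
  have hm : m = (1 / 2) * (d2 + K) := le_antisymm hmB hmA
  subst hm
  nlinarith [mul_nonneg (sq_nonneg α) hd2]

private lemma aux_con (N u2 I η μ L : ℝ) (hη : 0 < η) (hI : μ * N ≤ I)
    (hu : u2 ≤ L ^ 2 * N) :
    N - 2 * (η * I) + η ^ 2 * u2 ≤ (1 - 2 * η * μ + η ^ 2 * L ^ 2) * N := by
  nlinarith [mul_le_mul_of_nonneg_left hu (sq_nonneg η),
    mul_le_mul_of_nonneg_left hI hη.le]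

set_option maxHeartbeats 1000000 in
/-- Case `α ≤ Cη^p` of Theorem 1. There is `η̄ > 0` such that (i) for all
`η ∈ (0, η̄)`, setting `α = Cη^p`, the contraction factor
`1 − 2ημ + 2αηL + (1 + α²)η²L² < 1`; and (ii) under the hypotheses of the deterministic
convergence theorem, any trajectory satisfying the α-descent condition with
`α ≤ Cη^p` and `η < η̄` has iterates `z_t = g(θ_t)` converging linearly to `z*`. -/
theorem stmt8 (d n : ℕ) (μ L C p : ℝ) (hμ : 0 < μ) (hL : 0 < L) (hC : 0 < C) (hp : 0 < p)
    (g : EuclideanSpace ℝ (Fin d) → EuclideanSpace ℝ (Fin n))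
    (hg : Continuous g) (hconv : Convex ℝ (Set.range g))
    (F : EuclideanSpace ℝ (Fin n) → EuclideanSpace ℝ (Fin n))
    (hsmooth : ∀ x ∈ closure (Set.range g), ∀ y ∈ closure (Set.range g),
      ‖F x - F y‖ ≤ L * ‖x - y‖)
    (hmono : ∀ x ∈ closure (Set.range g), ∀ y ∈ closure (Set.range g),
      μ * ‖x - y‖ ^ 2 ≤ ⟪F x - F y, x - y⟫)
    (zs : EuclideanSpace ℝ (Fin n)) (hzs : zs ∈ closure (Set.range g))
    (hri : ∀ z ∈ closure (Set.range g), ∃ lam : ℝ, 1 < lam ∧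
      (1 - lam) • z + lam • zs ∈ closure (Set.range g))
    (hsol : ∀ z ∈ closure (Set.range g), 0 ≤ ⟪F zs, z - zs⟫) :
    ∃ ηbar : ℝ, 0 < ηbar ∧
      (∀ η : ℝ, 0 < η → η < ηbar →
        1 - 2 * η * μ + 2 * (C * η ^ p) * η * L + (1 + (C * η ^ p) ^ 2) * η ^ 2 * L ^ 2 < 1) ∧
      (∀ η α : ℝ, 0 < η → η < ηbar → 0 ≤ α → α ≤ C * η ^ p →
        ∀ θ : ℕ → EuclideanSpace ℝ (Fin d),
        ∀ ℓ : ℕ → EuclideanSpace ℝ (Fin d) → ℝ,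
          (∀ t θ', ℓ t θ' = (1 / 2) * ‖g θ' - (g (θ t) - η • F (g (θ t)))‖ ^ 2) →
          (∀ t, ℓ t (θ (t + 1)) - (⨅ θ', ℓ t θ') ≤
            α ^ 2 * (ℓ t (θ t) - (⨅ θ', ℓ t θ'))) →
          ∃ ρ : ℝ, 0 ≤ ρ ∧ ρ < 1 ∧
            ∀ t, ‖g (θ (t + 1)) - zs‖ ^ 2 ≤ ρ * ‖g (θ t) - zs‖ ^ 2) := by
  have hmain : ∃ ηbar : ℝ, 0 < ηbar ∧ ηbar * (2 * μ) ≤ 1 ∧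
      ∀ η : ℝ, 0 < η → η < ηbar →
        2 * (C * η ^ p) * η * L + (1 + (C * η ^ p) ^ 2) * η ^ 2 * L ^ 2 < 2 * η * μ := by
    set A : ℝ := min 1 ((μ / (2 * C * L)) ^ p⁻¹) with hA
    set B : ℝ := min (μ / ((1 + C ^ 2) * L ^ 2)) (1 / (2 * μ)) with hB
    refine ⟨min A B, ?_, ?_, ?_⟩
    · apply lt_min
      · exact lt_min one_pos (Real.rpow_pos_of_pos (by positivity) _)
      · exact lt_min (by positivity) (by positivity)
    · have h : min A B ≤ 1 / (2 * μ) := (min_le_right A B).trans (min_le_right _ _)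
      rw [le_div_iff₀ (by positivity)] at h
      linarith
    · intro η hη hηlt
      have hη1 : η < 1 := lt_of_lt_of_le hηlt ((min_le_left A B).trans (min_le_left _ _))
      have hx0 : 0 < η ^ p := Real.rpow_pos_of_pos hη _
      have hx1 : η ^ p ≤ 1 := Real.rpow_le_one hη.le hη1.le hp.le
      have h2 : η < (μ / (2 * C * L)) ^ p⁻¹ :=
        lt_of_lt_of_le hηlt ((min_le_left A B).trans (min_le_right _ _))
      have hxlt : η ^ p < μ / (2 * C * L) := by
        have h4 := Real.rpow_lt_rpow hη.le h2 hp
        rwa [Real.rpow_inv_rpow (by positivity) hp.ne'] at h4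
      have h3 : η < μ / ((1 + C ^ 2) * L ^ 2) :=
        lt_of_lt_of_le hηlt ((min_le_right A B).trans (min_le_left _ _))
      have hxlt' : 2 * C * L * (η ^ p) < μ := by
        rw [lt_div_iff₀ (by positivity)] at hxlt; linarith
      have h3' : (1 + C ^ 2) * L ^ 2 * η < μ := by
        rw [lt_div_iff₀ (by positivity)] at h3; linarith
      have e1 : 2 * (C * η ^ p) * η * L < μ * η := by
        have := mul_lt_mul_of_pos_right hxlt' hη; nlinarith
      have e2 : (1 + (C * η ^ p) ^ 2) * η ^ 2 * L ^ 2 ≤ (1 + C ^ 2) * η ^ 2 * L ^ 2 := by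
        have hc2 : (C * η ^ p) ^ 2 ≤ C ^ 2 := by
          have : η ^ p * η ^ p ≤ 1 := mul_le_one₀ hx1 hx0.le hx1
          nlinarith [sq_nonneg C]
        nlinarith [sq_nonneg η, sq_nonneg L, mul_nonneg (sq_nonneg η) (sq_nonneg L)]
      have e3 : (1 + C ^ 2) * η ^ 2 * L ^ 2 < μ * η := by
        have := mul_lt_mul_of_pos_right h3' hη; nlinarith
      linarith
  obtain ⟨ηbar, hbar0, hbar1, hkey⟩ := hmain
  have horth : ∀ z ∈ closure (Set.range g), ⟪F zs, z - zs⟫ = 0 := by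
    intro z hz
    have h1 := hsol z hz
    obtain ⟨lam, hlam, hw⟩ := hri z hz
    have h2 := hsol _ hw
    have heq : ((1 - lam) • z + lam • zs) - zs = (1 - lam) • (z - zs) := by module
    rw [heq, real_inner_smul_right] at h2
    have hle : ⟪F zs, z - zs⟫ ≤ 0 := by
      by_contra hpos
      push_neg at hpos
      have : (1 - lam) * ⟪F zs, z - zs⟫ < 0 :=
        mul_neg_of_neg_of_pos (by linarith) hpos
      linarith
    exact le_antisymm hle h1
  have hZconv : Convex ℝ (closure (Set.range g)) := hconv.closure
  have hZcomp : IsComplete (closure (Set.range g)) := isClosed_closure.isComplete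
  refine ⟨ηbar, hbar0, ?_, ?_⟩
  · intro η hη hηlt
    have := hkey η hη hηlt
    linarith
  · intro η α hη hηlt hα hαle θ ℓ hℓ hdesc
    have hkeyη := hkey η hη hηlt
    have hx0 : 0 < η ^ p := Real.rpow_pos_of_pos hη _
    have hβ : 0 < C * η ^ p := by positivity
    set r : ℝ := 1 - 2 * η * μ + η ^ 2 * L ^ 2 with hrdef
    have h2ημ : η * (2 * μ) < 1 := by
      have h5 : η * (2 * μ) < ηbar * (2 * μ) :=
        mul_lt_mul_of_pos_right hηlt (by positivity)
      linarith
    have hr0 : 0 ≤ r := aux_r0 η μ L h2ημ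
    have hr1 : r ≤ 1 := aux_r1 η μ L _ hβ hη hL hkeyη
    set s : ℝ := Real.sqrt r with hsdef
    have hs0 : 0 ≤ s := Real.sqrt_nonneg _
    have hs2 : s ^ 2 = r := Real.sq_sqrt hr0
    have hs1 : s ≤ 1 := by
      rw [hsdef, show (1 : ℝ) = Real.sqrt 1 by simp]
      exact Real.sqrt_le_sqrt hr1
    refine ⟨(α * η * L + s) ^ 2, sq_nonneg _, ?_, ?_⟩
    · exact aux_rho α (C * η ^ p) η L s μ hα hαle hη hL hs0 hs1 hs2 hkeyη
    · intro t
      set zt := g (θ t) with hzt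
      set zt1 := g (θ (t + 1)) with hzt1
      have hztZ : zt ∈ closure (Set.range g) := subset_closure ⟨θ t, rfl⟩
      have hzt1Z : zt1 ∈ closure (Set.range g) := subset_closure ⟨θ (t + 1), rfl⟩
      set u : EuclideanSpace ℝ (Fin n) := F zt - F zs with hu
      set y' : EuclideanSpace ℝ (Fin n) := zt - η • u with hy'
      obtain ⟨c, hcZ, hcmin⟩ :=
        exists_norm_eq_iInf_of_complete_convex ⟨zs, hzs⟩ hZcomp hZconv y'
      have hchar : ∀ w ∈ closure (Set.range g), ⟪y' - c, w - c⟫ ≤ 0 :=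
        (norm_eq_iInf_iff_real_inner_le_zero hZconv hcZ).1 hcmin
      set KK : ℝ := 2 * η * ⟪zs - y', F zs⟫ + η ^ 2 * ‖F zs‖ ^ 2 with hKK
      have hdecomp : ∀ w ∈ closure (Set.range g),
          ‖w - (zt - η • F zt)‖ ^ 2 = ‖w - y'‖ ^ 2 + KK := by
        intro w hw
        have hw0 : w - (zt - η • F zt) = (w - y') + η • F zs := by
          rw [hy', hu]; module
        rw [hw0, norm_add_sq_real, real_inner_smul_right, norm_smul,
          Real.norm_eq_abs, abs_of_pos hη]
        have hwy : ⟪w - y', F zs⟫ = ⟪zs - y', F zs⟫ := by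
          have h0 : ⟪w - zs, F zs⟫ = 0 := by
            rw [real_inner_comm]; exact horth w hw
          have hsplit : w - y' = (w - zs) + (zs - y') := by abel
          rw [hsplit, inner_add_left, h0, zero_add]
        rw [hwy, hKK]; ring
      have hℓ' : ∀ θ', ℓ t θ' = (1 / 2) * (‖g θ' - y'‖ ^ 2 + KK) := by
        intro θ'
        rw [hℓ t θ', ← hzt, hdecomp (g θ') (subset_closure ⟨θ', rfl⟩)]
      have hBdd : BddBelow (Set.range (ℓ t)) := by
        refine ⟨KK / 2, ?_⟩
        rintro x ⟨θ', rfl⟩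
        rw [hℓ' θ']
        linarith [sq_nonneg ‖g θ' - y'‖]
      set m : ℝ := ⨅ θ', ℓ t θ' with hm
      set d2 : ℝ := ‖y' - c‖ ^ 2 with hd2
      have hd2' : ‖c - y'‖ ^ 2 = d2 := by rw [hd2, norm_sub_rev]
      have hd2nn : 0 ≤ d2 := by rw [hd2]; positivity
      have hcdist : ∀ w ∈ closure (Set.range g), d2 ≤ ‖y' - w‖ ^ 2 := by
        intro w hw
        have h := hchar w hw
        have hex : ‖y' - w‖ ^ 2 = ‖y' - c‖ ^ 2 - 2 * ⟪y' - c, w - c⟫ + ‖w - c‖ ^ 2 := by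
          rw [show y' - w = (y' - c) - (w - c) by abel, norm_sub_sq_real]
        rw [hd2]
        linarith [sq_nonneg ‖w - c‖]
      have hmA : (1 / 2) * (d2 + KK) ≤ m := by
        apply le_ciInf
        intro θ'
        rw [hℓ' θ']
        have h6 := hcdist (g θ') (subset_closure ⟨θ', rfl⟩)
        rw [norm_sub_rev] at h6
        linarith
      have hmB : m ≤ (1 / 2) * (d2 + KK) := by
        have hset : closure (Set.range g) ⊆ {w | m ≤ (1 / 2) * (‖w - y'‖ ^ 2 + KK)} := by
          apply closure_minimal
          · rintro w ⟨θ', rfl⟩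
            show m ≤ (1 / 2) * (‖g θ' - y'‖ ^ 2 + KK)
            rw [← hℓ' θ']
            exact ciInf_le hBdd θ'
          · apply isClosed_le continuous_const
            exact continuous_const.mul
              (((continuous_id.sub continuous_const).norm.pow 2).add continuous_const)
        have h7 := hset hcZ
        simp only [Set.mem_setOf_eq] at h7
        rwa [hd2'] at h7
      have hd := hdesc t
      rw [← hm, hℓ' (θ (t + 1)), hℓ' (θ t), ← hzt1, ← hzt] at hd
      have hzty : zt - y' = η • u := by rw [hy']; abel
      have hztyn : ‖zt - y'‖ ^ 2 = η ^ 2 * ‖u‖ ^ 2 := by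
        rw [hzty, norm_smul, Real.norm_eq_abs, abs_of_pos hη, mul_pow]
      rw [hztyn] at hd
      have hobtuse : ‖zt1 - c‖ ^ 2 + d2 ≤ ‖zt1 - y'‖ ^ 2 := by
        have h := hchar zt1 hzt1Z
        have hex : ‖zt1 - y'‖ ^ 2 = ‖zt1 - c‖ ^ 2 - 2 * ⟪zt1 - c, y' - c⟫ + d2 := by
          rw [show zt1 - y' = (zt1 - c) - (y' - c) by abel, norm_sub_sq_real, hd2]
        rw [real_inner_comm] at h
        linarith
      have hproj : ‖zt1 - c‖ ^ 2 ≤ α ^ 2 * (η ^ 2 * ‖u‖ ^ 2) :=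
        aux_desc _ _ _ _ _ _ _ hd hmA hmB hobtuse hd2nn
      have hnonexp : ‖c - zs‖ ^ 2 ≤ ‖y' - zs‖ ^ 2 := by
        have h := hchar zs hzs
        have hex : ‖y' - zs‖ ^ 2 = d2 - 2 * ⟪y' - c, zs - c⟫ + ‖zs - c‖ ^ 2 := by
          rw [show y' - zs = (y' - c) - (zs - c) by abel, norm_sub_sq_real, hd2]
        rw [show ‖c - zs‖ = ‖zs - c‖ from norm_sub_rev _ _]
        linarith
      have hLip : ‖u‖ ≤ L * ‖zt - zs‖ := hsmooth zt hztZ zs hzs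
      have hMon : μ * ‖zt - zs‖ ^ 2 ≤ ⟪u, zt - zs⟫ := hmono zt hztZ zs hzs
      have hu2 : ‖u‖ ^ 2 ≤ L ^ 2 * ‖zt - zs‖ ^ 2 := by
        have := pow_le_pow_left₀ (norm_nonneg u) hLip 2
        rwa [mul_pow] at this
      have hcontract : ‖y' - zs‖ ^ 2 ≤ r * ‖zt - zs‖ ^ 2 := by
        have hy'zs : y' - zs = (zt - zs) - η • u := by rw [hy']; abel
        rw [hy'zs, norm_sub_sq_real, real_inner_smul_right, norm_smul,
          Real.norm_eq_abs, abs_of_pos hη, mul_pow, real_inner_comm, hrdef]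
        exact aux_con _ _ _ _ _ _ hη hMon hu2
      have ha : ‖zt1 - c‖ ≤ α * η * L * ‖zt - zs‖ := by
        apply aux_le_of_sq_le (norm_nonneg _) (by positivity)
        calc ‖zt1 - c‖ ^ 2 ≤ α ^ 2 * (η ^ 2 * ‖u‖ ^ 2) := hproj
          _ ≤ α ^ 2 * (η ^ 2 * (L ^ 2 * ‖zt - zs‖ ^ 2)) := by
              apply mul_le_mul_of_nonneg_left _ (sq_nonneg α)
              exact mul_le_mul_of_nonneg_left hu2 (sq_nonneg η)
          _ = (α * η * L * ‖zt - zs‖) ^ 2 := by ring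
      have hb : ‖c - zs‖ ≤ s * ‖zt - zs‖ := by
        apply aux_le_of_sq_le (norm_nonneg _) (by positivity)
        calc ‖c - zs‖ ^ 2 ≤ ‖y' - zs‖ ^ 2 := hnonexp
          _ ≤ r * ‖zt - zs‖ ^ 2 := hcontract
          _ = (s * ‖zt - zs‖) ^ 2 := by rw [mul_pow, hs2]
      have hfin : ‖zt1 - zs‖ ≤ (α * η * L + s) * ‖zt - zs‖ := by
        calc ‖zt1 - zs‖ = ‖(zt1 - c) + (c - zs)‖ := by rw [show zt1 - zs = (zt1 - c) + (c - zs) by abel]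
          _ ≤ ‖zt1 - c‖ + ‖c - zs‖ := norm_add_le _ _
          _ ≤ α * η * L * ‖zt - zs‖ + s * ‖zt - zs‖ := add_le_add ha hb
          _ = (α * η * L + s) * ‖zt - zs‖ := by ring
      have hfin2 := pow_le_pow_left₀ (norm_nonneg (zt1 - zs)) hfin 2
      rw [mul_pow] at hfin2
      exact hfin2
end

section
/- Let F : ℝ² → ℝ² be the linear operator given by the matrix [[1, 1], [−1, 1]], which is √2-smooth and 1-strongly monotone. For η > 0 define the update z_{t+1} = M_η z_t with M_η = [[1, −η], [η, 1]]. Then for every z ∈ ℝ²: (i) ‖M_η z − z + ηF z‖ = (1/√2)·η‖F z‖, so the sequence {z_t} satisfies the α-descent condition with α = 1/√2 < 1 (the surrogate infimum being zero in the unconstrained case); and (ii) ‖M_η z‖² = (1 + η²)‖z‖², hence for every η > 0 and every z_0 ≠ 0 the iterates satisfy ‖z_t‖ = (1 + η²)^{t/2}‖z_0‖ → ∞. -/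
open scoped RealInnerProductSpace

lemma eq_of_sq_eq' {a b : ℝ} (ha : 0 ≤ a) (hb : 0 ≤ b) (h : a ^ 2 = b ^ 2) : a = b := by
  rw [← Real.sqrt_sq ha, ← Real.sqrt_sq hb, h]

lemma normsq2 (v : EuclideanSpace ℝ (Fin 2)) : ‖v‖ ^ 2 = v 0 ^ 2 + v 1 ^ 2 := by
  rw [EuclideanSpace.norm_eq, Real.sq_sqrt (by positivity)]
  simp [Fin.sum_univ_two, sq_abs]

lemma inner2 (x y : EuclideanSpace ℝ (Fin 2)) : ⟪x, y⟫ = x 0 * y 0 + x 1 * y 1 := by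
  simp [PiLp.inner_apply, Fin.sum_univ_two, mul_comm]

/-- Divergence counterexample. For `F z = (z₀ + z₁, −z₀ + z₁)` (which is
`√2`-smooth and `1`-strongly monotone) and the update `M_η z = (z₀ − ηz₁, ηz₀ + z₁)`:
(i) `‖M_η z − z + ηF z‖ = (1/√2)η‖F z‖`, so the iterates satisfy the α-descent condition
with `α = 1/√2 < 1`; (ii) `‖M_η z‖² = (1 + η²)‖z‖²`, hence
`‖M_η^[t] z₀‖ = (1 + η²)^{t/2}‖z₀‖ → ∞` for every `η > 0` and `z₀ ≠ 0`. -/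
theorem stmt9 (η : ℝ) (hη : 0 < η)
    (F M : EuclideanSpace ℝ (Fin 2) → EuclideanSpace ℝ (Fin 2))
    (hF : ∀ z, F z 0 = z 0 + z 1 ∧ F z 1 = -z 0 + z 1)
    (hM : ∀ z, M z 0 = z 0 - η * z 1 ∧ M z 1 = η * z 0 + z 1) :
    (∀ x y, ‖F x - F y‖ ≤ Real.sqrt 2 * ‖x - y‖) ∧
    (∀ x y, ‖x - y‖ ^ 2 ≤ ⟪F x - F y, x - y⟫) ∧
    (∀ z, ‖M z - z + η • F z‖ = (1 / Real.sqrt 2) * (η * ‖F z‖)) ∧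
    (∀ z, ‖M z‖ ^ 2 = (1 + η ^ 2) * ‖z‖ ^ 2) ∧
    (∀ z0 : EuclideanSpace ℝ (Fin 2), ∀ t : ℕ,
      ‖M^[t] z0‖ = (1 + η ^ 2) ^ ((t : ℝ) / 2) * ‖z0‖) ∧
    (∀ z0 : EuclideanSpace ℝ (Fin 2), z0 ≠ 0 →
      Filter.Tendsto (fun t : ℕ => ‖M^[t] z0‖) Filter.atTop Filter.atTop) := by
  have hFsq : ∀ z : EuclideanSpace ℝ (Fin 2), ‖F z‖ ^ 2 = 2 * ‖z‖ ^ 2 := by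
    intro z
    rw [normsq2, normsq2, (hF z).1, (hF z).2]; ring
  have smooth : ∀ x y : EuclideanSpace ℝ (Fin 2), ‖F x - F y‖ ≤ Real.sqrt 2 * ‖x - y‖ := by
    intro x y
    have h1 : ‖F x - F y‖ ^ 2 = 2 * ‖x - y‖ ^ 2 := by
      rw [normsq2, normsq2]
      simp only [PiLp.sub_apply, (hF x).1, (hF x).2, (hF y).1, (hF y).2]
      ring
    have h2 : (Real.sqrt 2 * ‖x - y‖) ^ 2 = 2 * ‖x - y‖ ^ 2 := by
      rw [mul_pow, Real.sq_sqrt (by norm_num)]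
    exact le_of_eq (eq_of_sq_eq' (norm_nonneg _) (by positivity) (h1.trans h2.symm))
  have mono : ∀ x y : EuclideanSpace ℝ (Fin 2), ‖x - y‖ ^ 2 ≤ ⟪F x - F y, x - y⟫ := by
    intro x y
    rw [inner2, normsq2]
    simp only [PiLp.sub_apply, (hF x).1, (hF x).2, (hF y).1, (hF y).2]
    ring_nf
    nlinarith [sq_nonneg (x 0 - y 0), sq_nonneg (x 1 - y 1)]
  have descent : ∀ z : EuclideanSpace ℝ (Fin 2),
      ‖M z - z + η • F z‖ = (1 / Real.sqrt 2) * (η * ‖F z‖) := by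
    intro z
    have hL : ‖M z - z + η • F z‖ ^ 2 = η ^ 2 * ‖z‖ ^ 2 := by
      rw [normsq2]
      simp only [PiLp.add_apply, PiLp.sub_apply, PiLp.smul_apply, smul_eq_mul,
        (hF z).1, (hF z).2, (hM z).1, (hM z).2, normsq2]
      ring
    have hR : ((1 / Real.sqrt 2) * (η * ‖F z‖)) ^ 2 = η ^ 2 * ‖z‖ ^ 2 := by
      rw [mul_pow, mul_pow, hFsq, div_pow, one_pow, Real.sq_sqrt (by norm_num : (2:ℝ) ≥ 0)]
      ring
    exact eq_of_sq_eq' (norm_nonneg _) (by positivity) (hL.trans hR.symm)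
  have growsq : ∀ z : EuclideanSpace ℝ (Fin 2), ‖M z‖ ^ 2 = (1 + η ^ 2) * ‖z‖ ^ 2 := by
    intro z
    rw [normsq2, normsq2, (hM z).1, (hM z).2]; ring
  have hpos : (0:ℝ) < 1 + η ^ 2 := by positivity
  have grow : ∀ z : EuclideanSpace ℝ (Fin 2), ‖M z‖ = Real.sqrt (1 + η ^ 2) * ‖z‖ := by
    intro z
    refine eq_of_sq_eq' (norm_nonneg _) (by positivity) ?_
    rw [growsq z, mul_pow, Real.sq_sqrt hpos.le]
  have iter : ∀ z0 : EuclideanSpace ℝ (Fin 2), ∀ t : ℕ,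
      ‖M^[t] z0‖ = (1 + η ^ 2) ^ ((t : ℝ) / 2) * ‖z0‖ := by
    intro z0 t
    induction t with
    | zero => simp
    | succ n ih =>
      rw [Function.iterate_succ_apply', grow, ih, ← mul_assoc]
      congr 1
      rw [Real.sqrt_eq_rpow, ← Real.rpow_add hpos]
      congr 1
      push_cast
      ring
    
  refine ⟨smooth, mono, descent, growsq, iter, ?_⟩
  intro z0 hz0
  have hz0' : 0 < ‖z0‖ := norm_pos_iff.mpr hz0
  have hr : 1 < Real.sqrt (1 + η ^ 2) := by
    rw [show (1:ℝ) < Real.sqrt (1 + η ^ 2) ↔ _ from Real.lt_sqrt (by norm_num)]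
    nlinarith
  have key : ∀ t : ℕ, ‖M^[t] z0‖ = (Real.sqrt (1 + η ^ 2)) ^ t * ‖z0‖ := by
    intro t
    rw [iter z0 t, Real.sqrt_eq_rpow, ← Real.rpow_natCast ((1 + η ^ 2) ^ ((1:ℝ)/2)) t,
      ← Real.rpow_mul hpos.le]
    ring_nf
  simp only [key]
  exact (tendsto_pow_atTop_atTop_of_one_lt hr).atTop_mul_const hz0'
end

section
/- Let f : ℝ^n → ℝ be differentiable and satisfy the μ-PL condition: ‖∇f(z)‖² ≥ μ(f(z) − inf_{z'} f(z')) for all z ∈ ℝ^n. Let g : ℝ^d → ℝ^n be differentiable such that for some σ_min > 0, ‖Dg(θ)^T v‖ ≥ σ_min‖v‖ for all θ ∈ ℝ^d and v ∈ ℝ^n (the singular values of Dg(θ)^T are uniformly lower bounded by σ_min). Then the composition f ∘ g satisfies the μσ_min²-PL condition: ‖∇(f ∘ g)(θ)‖² ≥ μσ_min²(f(g(θ)) − inf_{θ'} f(g(θ'))) for all θ ∈ ℝ^d. -/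
open scoped RealInnerProductSpace Topology

lemma my_inner_gradient {F : Type*} [NormedAddCommGroup F] [InnerProductSpace ℝ F]
    [CompleteSpace F] (f : F → ℝ) (x w : F) :
    ⟪gradient f x, w⟫ = fderiv ℝ f x w := by
  simp [gradient, InnerProductSpace.toDual_symm_apply]

lemma my_norm_gradient {F : Type*} [NormedAddCommGroup F] [InnerProductSpace ℝ F]
    [CompleteSpace F] (f : F → ℝ) (x : F) :
    ‖gradient f x‖ = ‖fderiv ℝ f x‖ :=
  LinearIsometryEquiv.norm_map _ _

lemma my_gradient_comp {E F : Type*} [NormedAddCommGroup E] [InnerProductSpace ℝ E]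
    [CompleteSpace E] [NormedAddCommGroup F] [InnerProductSpace ℝ F] [CompleteSpace F]
    (g : E → F) (φ : F → ℝ) (θ : E) (hg : DifferentiableAt ℝ g θ)
    (hφ : DifferentiableAt ℝ φ (g θ)) :
    gradient (φ ∘ g) θ = ContinuousLinearMap.adjoint (fderiv ℝ g θ) (gradient φ (g θ)) := by
  apply ext_inner_right ℝ
  intro w
  rw [my_inner_gradient, ContinuousLinearMap.adjoint_inner_left, my_inner_gradient,
    fderiv_comp θ hφ hg]
  rfl


/-- Descent step: if the gradient at `x` has norm `≥ ε`, one can decrease `h` at rate `ε/2`. -/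
lemma my_descent {E : Type*} [NormedAddCommGroup E] [InnerProductSpace ℝ E]
    [CompleteSpace E] (h : E → ℝ) (hd : Differentiable ℝ h) {ε : ℝ} (hε : 0 < ε)
    {x : E} (hx : ε ≤ ‖gradient h x‖) :
    ∃ t : ℝ, 0 < t ∧ ∃ y : E, dist y x ≤ t ∧ h y + ε / 2 * t ≤ h x := by
  have hgn : 0 < ‖gradient h x‖ := lt_of_lt_of_le hε hx
  set v : E := -((‖gradient h x‖)⁻¹ • gradient h x) with hv
  have hvn : ‖v‖ = 1 := by
    rw [hv, norm_neg, norm_smul, norm_inv, norm_norm, inv_mul_cancel₀ hgn.ne']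
  have hinner : ⟪gradient h x, v⟫ = -‖gradient h x‖ := by
    rw [hv, inner_neg_right, real_inner_smul_right, real_inner_self_eq_norm_sq]
    field_simp
  -- the curve t ↦ x + t • v
  have hcurve : HasDerivAt (fun t : ℝ => x + t • v) v 0 := by
    simpa using ((hasDerivAt_id (0:ℝ)).smul_const v).const_add x
  have hcomp : HasDerivAt (fun t : ℝ => h (x + t • v)) ⟪gradient h x, v⟫ 0 := by
    have hfd : HasFDerivAt h (InnerProductSpace.toDual ℝ E (gradient h x)) x :=
      (hd x).hasGradientAt.hasFDerivAt
    have hfd' : HasFDerivAt h (InnerProductSpace.toDual ℝ E (gradient h x)) ((fun t : ℝ => x + t • v) 0) := by simpa using hfd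
    have := hfd'.comp_hasDerivAt (0:ℝ) hcurve
    simpa [InnerProductSpace.toDual_apply_apply, Function.comp_def] using this
  rw [hasDerivAt_iff_tendsto_slope] at hcomp
  have hlt : ⟪gradient h x, v⟫ < -(ε/2) := by
    rw [hinner]; linarith
  have hev : ∀ᶠ t in 𝓝[>] (0:ℝ),
      slope (fun t : ℝ => h (x + t • v)) 0 t < -(ε/2) := by
    apply (hcomp.mono_left (nhdsWithin_mono _ ?_)).eventually (gt_mem_nhds hlt)
    intro t ht
    exact ne_of_gt ht
  obtain ⟨t, htpos, hts⟩ := (hev.and self_mem_nhdsWithin).exists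
  refine ⟨t, hts, x + t • v, ?_, ?_⟩
  · rw [dist_eq_norm]
    simp [norm_smul, hvn, abs_of_pos hts]
  · have hslope : slope (fun t : ℝ => h (x + t • v)) 0 t
        = (h (x + t • v) - h x) / t := by
      simp [slope_def_field]
    rw [hslope] at htpos
    have := (div_lt_iff₀ hts).mp htpos
    nlinarith

/-- Almost critical points: a nonnegative differentiable function on a complete
inner product space has points of arbitrarily small gradient. -/
lemma my_almost_critical {E : Type*} [NormedAddCommGroup E] [InnerProductSpace ℝ E]
    [CompleteSpace E] (h : E → ℝ) (hd : Differentiable ℝ h) (h0 : ∀ x, 0 ≤ h x)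
    {ε : ℝ} (hε : 0 < ε) : ∃ x, ‖gradient h x‖ < ε := by
  by_contra hcon
  push_neg at hcon
  -- the set of admissible step sizes from x
  set S : E → Set ℝ := fun x => {t | 0 ≤ t ∧ ∃ y : E, dist y x ≤ t ∧ h y + ε / 2 * t ≤ h x}
    with hS
  have hS0 : ∀ x, (0:ℝ) ∈ S x := fun x => ⟨le_refl 0, x, by simp⟩
  have hSbdd : ∀ x, BddAbove (S x) := by
    intro x
    refine ⟨2 / ε * h x, fun t ht => ?_⟩
    obtain ⟨ht0, y, -, hy2⟩ := ht
    have hy0 := h0 y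
    have h4 : ε / 2 * t ≤ h x := by linarith
    calc t = 2 / ε * (ε / 2 * t) := by field_simp
    _ ≤ 2 / ε * h x := mul_le_mul_of_nonneg_left h4 (by positivity)
  set s : E → ℝ := fun x => sSup (S x) with hs
  have hspos : ∀ x, 0 < s x := by
    intro x
    obtain ⟨t, htpos, hy⟩ := my_descent h hd hε (hcon x)
    exact lt_of_lt_of_le htpos (le_csSup (hSbdd x) ⟨htpos.le, hy⟩)
  -- choose a step of size at least s x / 2
  have hchoice : ∀ x : E, ∃ y : E, ∃ t : ℝ, s x / 2 < t ∧ dist y x ≤ t ∧ h y + ε / 2 * t ≤ h x := by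
    intro x
    obtain ⟨t, htS, htgt⟩ := exists_lt_of_lt_csSup ⟨0, hS0 x⟩ (half_lt_self (hspos x))
    obtain ⟨-, y, hy1, hy2⟩ := htS
    exact ⟨y, t, htgt, hy1, hy2⟩
  choose step t hstep ht1 ht2 using hchoice
  -- the iterated sequence
  set xx : ℕ → E := fun n => step^[n] 0 with hxx
  have hxxsucc : ∀ n, xx (n + 1) = step (xx n) := by
    intro n; rw [hxx]; exact Function.iterate_succ_apply' step n 0
  set u : ℕ → ℝ := fun n => t (xx n) with hu
  have hu0 : ∀ n, 0 ≤ u n := fun n =>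
    ((half_pos (hspos (xx n))).trans (hstep (xx n))).le
  have hdec : ∀ n, h (xx (n + 1)) + ε / 2 * u n ≤ h (xx n) := by
    intro n; rw [hxxsucc]; exact ht2 (xx n)
  have hdist : ∀ n, dist (xx n) (xx (n + 1)) ≤ u n := by
    intro n; rw [hxxsucc, dist_comm]; exact ht1 (xx n)
  -- summability of the steps
  have hsum : ∀ n, ∑ i ∈ Finset.range n, u i ≤ 2 / ε * h (xx 0) := by
    intro n
    have key : ∀ n, ε / 2 * ∑ i ∈ Finset.range n, u i ≤ h (xx 0) - h (xx n) := by
      intro n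
      induction n with
      | zero => simp
      | succ m ih =>
          rw [Finset.sum_range_succ]
          have := hdec m
          nlinarith
    have h1 := key n
    have h2 := h0 (xx n)
    have h3 : ε / 2 * ∑ i ∈ Finset.range n, u i ≤ h (xx 0) := by linarith
    calc ∑ i ∈ Finset.range n, u i = 2 / ε * (ε / 2 * ∑ i ∈ Finset.range n, u i) := by
          field_simp
    _ ≤ 2 / ε * h (xx 0) := mul_le_mul_of_nonneg_left h3 (by positivity)
  have husum : Summable u := summable_of_sum_range_le hu0 hsum
  have hcauchy : CauchySeq xx := cauchySeq_of_dist_le_of_summable u hdist husum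
  obtain ⟨xs, hxs⟩ := cauchySeq_tendsto_of_complete hcauchy
  -- along the sequence, h decreases proportionally to distance
  have hkey : ∀ n m, n ≤ m → h (xx m) + ε / 2 * dist (xx n) (xx m) ≤ h (xx n) := by
    intro n m hnm
    induction m with
    | zero => simp_all
    | succ k ih =>
        rcases lt_or_ge n (k+1) with hlt | hge
        · have hnk : n ≤ k := Nat.lt_succ_iff.mp hlt
          have h1 := ih hnk
          have h2 := hdec k
          have h3 : dist (xx n) (xx (k+1)) ≤ dist (xx n) (xx k) + u k :=
            le_trans (dist_triangle _ _ _) (by linarith [hdist k])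
          nlinarith
        · have : n = k + 1 := le_antisymm hnm hge
          subst this; simp
  have hlim : ∀ n, h xs + ε / 2 * dist (xx n) xs ≤ h (xx n) := by
    intro n
    have hcont : Continuous h := hd.continuous
    have htend : Filter.Tendsto (fun m => h (xx m) + ε / 2 * dist (xx n) (xx m))
        Filter.atTop (nhds (h xs + ε / 2 * dist (xx n) xs)) :=
      ((hcont.continuousAt.tendsto.comp hxs).add
        (((continuous_const.dist continuous_id).continuousAt.tendsto.comp hxs).const_mul _))
    refine le_of_tendsto htend ?_
    filter_upwards [Filter.eventually_ge_atTop n] with m hm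
    exact hkey n m hm
  -- final contradiction: steps from xs show s (xx n) stays bounded below
  obtain ⟨ts, htspos, ys, hys1, hys2⟩ := my_descent h hd hε (hcon xs)
  have hSn : ∀ n, ts + dist xs (xx n) ∈ S (xx n) := by
    intro n
    refine ⟨by positivity, ys, ?_, ?_⟩
    · calc dist ys (xx n) ≤ dist ys xs + dist xs (xx n) := dist_triangle _ _ _
      _ ≤ ts + dist xs (xx n) := by linarith
    · have h1 := hlim n
      rw [dist_comm (xx n) xs] at h1
      nlinarith
  have hlb : ∀ n, ts / 2 < u n := by
    intro n
    have h1 : ts + dist xs (xx n) ≤ s (xx n) := le_csSup (hSbdd (xx n)) (hSn n)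
    have h2 : ts ≤ s (xx n) := le_trans (le_add_of_nonneg_right dist_nonneg) h1
    have h3 := hstep (xx n)
    show ts / 2 < t (xx n)
    linarith
  have hto0 : Filter.Tendsto u Filter.atTop (nhds 0) := husum.tendsto_atTop_zero
  obtain ⟨n, hn⟩ := (hto0.eventually (gt_mem_nhds (half_pos htspos))).exists
  exact absurd (hlb n) (not_lt.mpr hn.le)

lemma my_grad_norm_sq {F : Type*} [NormedAddCommGroup F] [InnerProductSpace ℝ F]
    [CompleteSpace F] (z w : F) :
    HasGradientAt (fun w => ‖w - z‖ ^ 2) ((2:ℝ) • (w - z)) w := by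
  have h1 : HasFDerivAt (fun w : F => w - z) (ContinuousLinearMap.id ℝ F) w :=
    (hasFDerivAt_id w).sub_const z
  have h2 := h1.inner ℝ h1
  have h3 : HasFDerivAt (fun w : F => ‖w - z‖ ^ 2)
      ((fderivInnerCLM ℝ (w - z, w - z)).comp
        ((ContinuousLinearMap.id ℝ F).prod (ContinuousLinearMap.id ℝ F))) w := by
    convert h2 using 2
    · rfl
    rename_i w'
    exact (real_inner_self_eq_norm_sq (w' - z)).symm
  have h4 : (fderivInnerCLM ℝ (w - z, w - z)).comp
        ((ContinuousLinearMap.id ℝ F).prod (ContinuousLinearMap.id ℝ F))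
      = InnerProductSpace.toDual ℝ F ((2:ℝ) • (w - z)) := by
    ext u
    simp only [ContinuousLinearMap.coe_comp', Function.comp_apply,
      ContinuousLinearMap.prod_apply, ContinuousLinearMap.coe_id', id_eq,
      fderivInnerCLM_apply, InnerProductSpace.toDual_apply_apply, real_inner_smul_left]
    rw [real_inner_comm]
    ring
  rw [h4] at h3
  simpa using h3.hasGradientAt

/-- If `f` satisfies the μ-PL condition and the singular values of
`Dg(θ)ᵀ` are uniformly lower bounded by `σ_min > 0`, then `f ∘ g` satisfies the
`μσ_min²`-PL condition. -/
theorem stmt12 (d n : ℕ) (μ σmin : ℝ) (hμ : 0 < μ) (hσ : 0 < σmin)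
    (f : EuclideanSpace ℝ (Fin n) → ℝ) (hf : Differentiable ℝ f)
    (hPL : ∀ z, μ * (f z - ⨅ z', f z') ≤ ‖gradient f z‖ ^ 2)
    (g : EuclideanSpace ℝ (Fin d) → EuclideanSpace ℝ (Fin n))
    (hg : Differentiable ℝ g)
    (hlow : ∀ θ, ∀ v : EuclideanSpace ℝ (Fin n),
      σmin * ‖v‖ ≤ ‖ContinuousLinearMap.adjoint (fderiv ℝ g θ) v‖) :
    ∀ θ, μ * σmin ^ 2 * (f (g θ) - ⨅ θ', f (g θ')) ≤ ‖gradient (f ∘ g) θ‖ ^ 2 := by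
  set m : ℝ := ⨅ z', f z' with hm
  set c : ℝ := ⨅ θ', f (g θ') with hc
  -- Step 1 : the infimum comparison `m ≤ c`
  have hmc : m ≤ c := by
    rcases em (BddBelow (Set.range fun θ' => f (g θ'))) with hgb | hgnb
    · rcases em (BddBelow (Set.range f)) with hb | hnb
      · exact le_ciInf fun θ' => ciInf_le hb (g θ')
      · exfalso
        -- `f` unbounded below; pick `z` with `f z < c`
        obtain ⟨y, ⟨z, rfl⟩, hyz⟩ := not_bddBelow_iff.mp hnb c
        -- by continuity, `f < c` on a ball around `z`, so the range of `g` avoids it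
        obtain ⟨δ, hδ, hball⟩ := Metric.continuousAt_iff.mp (hf z).continuousAt
          (c - f z) (by linarith)
        have hfar : ∀ θ, δ ≤ dist (g θ) z := by
          intro θ
          by_contra hcl
          push_neg at hcl
          have h1 := hball hcl
          rw [Real.dist_eq, abs_lt] at h1
          have h2 : c ≤ f (g θ) := ciInf_le hgb θ
          linarith
        -- almost critical point of `θ ↦ ‖g θ - z‖²` gives a contradiction
        set q : EuclideanSpace ℝ (Fin n) → ℝ := fun w => ‖w - z‖ ^ 2 with hq
        have hqd : Differentiable ℝ q := (differentiable_id.sub_const z).norm_sq ℝ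
        have hh : Differentiable ℝ (q ∘ g) := hqd.comp hg
        have hpos : ∀ x, 0 ≤ (q ∘ g) x := fun x => by
          simp only [Function.comp_apply, hq]; positivity
        obtain ⟨x, hx⟩ := my_almost_critical (q ∘ g) hh hpos
          (ε := σmin * δ) (mul_pos hσ hδ)
        have hgradq : gradient q (g x) = (2:ℝ) • (g x - z) :=
          (my_grad_norm_sq z (g x)).gradient
        have hcomp : gradient (q ∘ g) x
            = ContinuousLinearMap.adjoint (fderiv ℝ g x) ((2:ℝ) • (g x - z)) := by
          rw [my_gradient_comp g q x (hg x) (hqd (g x)), hgradq]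
        have hlb : σmin * δ ≤ ‖gradient (q ∘ g) x‖ := by
          rw [hcomp]
          have h5 := hlow x ((2:ℝ) • (g x - z))
          have hnrm : ‖(2:ℝ) • (g x - z)‖ = 2 * ‖g x - z‖ := by
            simp [norm_smul]
          have hfar' : δ ≤ ‖g x - z‖ := by
            rw [← dist_eq_norm]; exact hfar x
          nlinarith
        exact absurd hx (not_lt.mpr hlb)
    · have hnb : ¬BddBelow (Set.range f) := by
        intro hb
        exact hgnb (hb.mono (by rintro y ⟨θ', rfl⟩; exact ⟨g θ', rfl⟩))
      rw [hm, hc, Real.iInf_of_not_bddBelow hnb, Real.iInf_of_not_bddBelow hgnb]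
  -- Step 2 : the gradient bound
  intro θ
  have hchain : gradient (f ∘ g) θ
      = ContinuousLinearMap.adjoint (fderiv ℝ g θ) (gradient f (g θ)) :=
    my_gradient_comp g f θ (hg θ) (hf (g θ))
  have h1 : σmin * ‖gradient f (g θ)‖ ≤ ‖gradient (f ∘ g) θ‖ := by
    rw [hchain]; exact hlow θ _
  have h2 : μ * (f (g θ) - m) ≤ ‖gradient f (g θ)‖ ^ 2 := hPL (g θ)
  have h3 : (σmin * ‖gradient f (g θ)‖) ^ 2 ≤ ‖gradient (f ∘ g) θ‖ ^ 2 :=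
    pow_le_pow_left₀ (by positivity) h1 2
  have h4 : μ * (f (g θ) - c) ≤ μ * (f (g θ) - m) :=
    mul_le_mul_of_nonneg_left (by linarith) hμ.le
  calc μ * σmin ^ 2 * (f (g θ) - c) = σmin ^ 2 * (μ * (f (g θ) - c)) := by ring
  _ ≤ σmin ^ 2 * (μ * (f (g θ) - m)) := mul_le_mul_of_nonneg_left h4 (sq_nonneg _)
  _ ≤ σmin ^ 2 * ‖gradient f (g θ)‖ ^ 2 := mul_le_mul_of_nonneg_left h2 (sq_nonneg _)
  _ = (σmin * ‖gradient f (g θ)‖) ^ 2 := (mul_pow _ _ 2).symm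
  _ ≤ ‖gradient (f ∘ g) θ‖ ^ 2 := h3
end
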